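/- arXiv:2604.21145 — 6 statements merged into one kernel-verified Lean document; each statement's English description precedes it below -/
import Mathlib

section
/- Let (V,E,μ) be an infinite, connected, locally finite weighted graph satisfying condition (p₀), let m>1, and suppose (p,q) lies in the region G₆, i.e., either (p < m−1−q and q < m−1) or (p,q) = (m−1,0). Then, without any volume growth assumption, every positive solution of (★) on V is constant; i.e., (★) admits no nontrivial positive solution. -/
variable {V : Type*}

/-- Vertex measure `μ(x) = ∑_{y} μ_{xy}` of a weighted graph. -/
noncomputable def vMeasure (μ : V → V → ℝ) (x : V) : ℝ := ∑ᶠ y, μ x y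

/-- The `m`-Laplacian on a weighted graph. -/
noncomputable def lapM (μ : V → V → ℝ) (m : ℝ) (u : V → ℝ) (x : V) : ℝ :=
  (vMeasure μ x)⁻¹ * ∑ᶠ y, μ x y * |u y - u x| ^ (m - 2) * (u y - u x)

/-- The norm of the gradient on a weighted graph. -/
noncomputable def gradNorm (μ : V → V → ℝ) (u : V → ℝ) (x : V) : ℝ :=
  Real.sqrt (∑ᶠ y, μ x y / (2 * vMeasure μ x) * (u y - u x) ^ 2)

theorem statement10
    (G : SimpleGraph V) (μ : V → V → ℝ)
    (hsymm : ∀ x y, μ x y = μ y x)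
    (hnonneg : ∀ x y, 0 ≤ μ x y)
    (hadj : ∀ x y, 0 < μ x y ↔ G.Adj x y)
    (hinf : Infinite V) (hconn : G.Connected)
    (hlf : ∀ x, (G.neighborSet x).Finite)
    (p₀ : ℝ) (hp₀ : 1 < p₀)
    (hcond : ∀ x y, G.Adj x y → 1 / p₀ ≤ μ x y / vMeasure μ x)
    (m p q : ℝ) (hm : 1 < m)
    (hreg : (p < m - 1 - q ∧ q < m - 1) ∨ (p = m - 1 ∧ q = 0))
    (u : V → ℝ) (hu : ∀ x, 0 < u x)
    (hgrad : ∀ x, q < 0 → 0 < gradNorm μ u x)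
    (hsol : ∀ x, lapM μ m u x + u x ^ p * gradNorm μ u x ^ q ≤ 0) :
    ∃ c : ℝ, ∀ x, u x = c := by
  classical
  haveI := hinf
  have hm1 : (0:ℝ) < m - 1 := by linarith
  have hp₀pos : (0:ℝ) < p₀ := lt_trans one_pos hp₀
  -- membership in the neighbor finset
  have hmemN : ∀ x y, y ∈ (hlf x).toFinset ↔ G.Adj x y := by
    intro x y
    simp [Set.Finite.mem_toFinset, SimpleGraph.mem_neighborSet]
  have hμzero : ∀ x y, y ∉ (hlf x).toFinset → μ x y = 0 := by
    intro x y h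
    by_contra h'
    exact h ((hmemN x y).2 ((hadj x y).1 ((hnonneg x y).lt_of_ne (Ne.symm h'))))
  have hsupp : ∀ (x : V) (f : V → ℝ), (∀ y, μ x y = 0 → f y = 0) →
      ∑ᶠ y, f y = ∑ y ∈ (hlf x).toFinset, f y := by
    intro x f hf
    refine finsum_eq_sum_of_support_subset f ?_
    intro y hy
    simp only [Function.mem_support] at hy
    by_contra hmem
    exact hy (hf y (hμzero x y hmem))
  have hvM : ∀ x, vMeasure μ x = ∑ y ∈ (hlf x).toFinset, μ x y :=
    fun x => hsupp x _ (fun _ h => h)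
  have hne : ∀ x, ((hlf x).toFinset).Nonempty := by
    intro x
    obtain ⟨y, hy⟩ := exists_ne x
    obtain ⟨w⟩ := hconn.preconnected x y
    exact ⟨w.getVert 1, (hmemN _ _).2
      (SimpleGraph.Walk.adj_snd (p := w) (SimpleGraph.Walk.not_nil_of_ne (Ne.symm hy)))⟩
  have hvMpos : ∀ x, 0 < vMeasure μ x := by
    intro x
    rw [hvM]
    exact Finset.sum_pos (fun y hy => (hadj x y).2 ((hmemN x y).1 hy)) (hne x)
  have hμlb : ∀ x y, G.Adj x y → vMeasure μ x / p₀ ≤ μ x y := by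
    intro x y h
    have h1 := hcond x y h
    rw [div_le_div_iff₀ hp₀pos (hvMpos x)] at h1
    rw [div_le_iff₀ hp₀pos]
    linarith
  -- the gradient as a finite sum
  set T : V → ℝ := fun x =>
    ∑ y ∈ (hlf x).toFinset, μ x y / (2 * vMeasure μ x) * (u y - u x) ^ 2 with hTdef
  have hgT : ∀ x, gradNorm μ u x = Real.sqrt (T x) := by
    intro x
    unfold gradNorm
    rw [hsupp x _ (fun y h => by rw [h]; simp)]
  have hTnn : ∀ x, ∀ y ∈ (hlf x).toFinset,
      0 ≤ μ x y / (2 * vMeasure μ x) * (u y - u x) ^ 2 :=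
    fun x y _ => mul_nonneg (div_nonneg (hnonneg x y) (by linarith [hvMpos x])) (sq_nonneg _)
  have hgnn : ∀ x, 0 ≤ gradNorm μ u x := fun x => (hgT x) ▸ Real.sqrt_nonneg _
  -- minimizing neighbor
  choose nxt hnxtmem hnxtmin using fun x => Finset.exists_min_image (hlf x).toFinset u (hne x)
  -- the Laplacian as a finite sum
  set S : V → ℝ := fun x =>
    ∑ y ∈ (hlf x).toFinset, μ x y * |u y - u x| ^ (m - 2) * (u y - u x) with hSdef
  have hlapS : ∀ x, lapM μ m u x = (vMeasure μ x)⁻¹ * S x := by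
    intro x
    unfold lapM
    rw [hsupp x _ (fun y h => by rw [h]; ring)]
  have hSle : ∀ x, (vMeasure μ x)⁻¹ * S x ≤ -(u x ^ p * gradNorm μ u x ^ q) := by
    intro x
    have := hsol x
    rw [hlapS x] at this
    linarith
  have hupq_nn : ∀ x, 0 ≤ u x ^ p * gradNorm μ u x ^ q :=
    fun x => mul_nonneg (Real.rpow_nonneg (hu x).le _) (Real.rpow_nonneg (hgnn x) _)
  have hSnonpos : ∀ x, S x ≤ 0 := by
    intro x
    by_contra h
    push_neg at h
    have := mul_pos (inv_pos.mpr (hvMpos x)) h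
    have h2 := hSle x
    linarith [hupq_nn x]
  -- per-term lower bound on the Laplacian sum
  have hterm : ∀ (x : V) (dd : ℝ), 0 < dd → (∀ y ∈ (hlf x).toFinset, u x - u y ≤ dd) →
      ∀ y ∈ (hlf x).toFinset,
        -(μ x y * dd ^ (m - 1)) ≤ μ x y * |u y - u x| ^ (m - 2) * (u y - u x) := by
    intro x dd hdd hdle y hy
    rcases le_or_gt (u x) (u y) with h | h
    · have h1 : 0 ≤ μ x y * |u y - u x| ^ (m - 2) * (u y - u x) :=
        mul_nonneg (mul_nonneg (hnonneg x y) (Real.rpow_nonneg (abs_nonneg _) _)) (by linarith)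
      have h2 : 0 ≤ μ x y * dd ^ (m - 1) :=
        mul_nonneg (hnonneg x y) (Real.rpow_nonneg hdd.le _)
      linarith
    · have hs : 0 < u x - u y := by linarith
      have habs : |u y - u x| = u x - u y := by
        rw [abs_of_neg (by linarith : u y - u x < 0)]; ring
      have hkey : μ x y * |u y - u x| ^ (m - 2) * (u y - u x)
          = -(μ x y * (u x - u y) ^ (m - 1)) := by
        rw [habs, show m - 1 = (m - 2) + 1 by ring, Real.rpow_add_one hs.ne']
        ring
      rw [hkey]
      have h3 : (u x - u y) ^ (m - 1) ≤ dd ^ (m - 1) :=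
        Real.rpow_le_rpow hs.le (hdle y hy) (by linarith)
      have h4 := mul_le_mul_of_nonneg_left h3 (hnonneg x y)
      linarith
  have hSlb : ∀ (x : V) (dd : ℝ), 0 < dd → (∀ y ∈ (hlf x).toFinset, u x - u y ≤ dd) →
      -(vMeasure μ x * dd ^ (m - 1)) ≤ S x := by
    intro x dd hdd hdle
    have h1 : ∑ y ∈ (hlf x).toFinset, -(μ x y * dd ^ (m - 1)) ≤ S x :=
      Finset.sum_le_sum (hterm x dd hdd hdle)
    have h2 : ∑ y ∈ (hlf x).toFinset, -(μ x y * dd ^ (m - 1))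
        = -(vMeasure μ x * dd ^ (m - 1)) := by
      rw [Finset.sum_neg_distrib, hvM x, Finset.sum_mul]
    linarith [h1, h2.symm.le]
  -- constants
  set P : ℝ := p₀ ^ (m - 1)⁻¹ with hPdef
  have hPpos : 0 < P := Real.rpow_pos_of_pos hp₀pos _
  have hP1 : 1 < P := by
    rw [hPdef, Real.one_lt_rpow_iff_of_pos hp₀pos]
    exact Or.inl ⟨hp₀, inv_pos.mpr hm1⟩
  set B : ℝ := if 0 ≤ q then (Real.sqrt (2 * p₀))⁻¹ else P / Real.sqrt 2 with hBdef
  have hBpos : 0 < B := by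
    rw [hBdef]
    split_ifs
    · exact inv_pos.mpr (Real.sqrt_pos.mpr (by linarith))
    · exact div_pos hPpos (Real.sqrt_pos.mpr two_pos)
  -- the main local estimate
  have hmain : ∀ x : V, (∃ y ∈ (hlf x).toFinset, u y < u x) →
      0 < u x - u (nxt x) ∧
      u x ^ p * B ^ q ≤ (u x - u (nxt x)) ^ (m - 1 - q) := by
    intro x hlow
    obtain ⟨y₀, hy₀mem, hy₀lt⟩ := hlow
    have hdd : 0 < u x - u (nxt x) := by
      have := hnxtmin x y₀ hy₀mem
      linarith
    set dd : ℝ := u x - u (nxt x) with hdd_def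
    have hdle : ∀ y ∈ (hlf x).toFinset, u x - u y ≤ dd := by
      intro y hy
      have := hnxtmin x y hy
      rw [hdd_def]
      linarith
    have hI : u x ^ p * gradNorm μ u x ^ q ≤ dd ^ (m - 1) := by
      have h1 := hSlb x dd hdd hdle
      have h2 := hSle x
      have h3 : (vMeasure μ x)⁻¹ * (-(vMeasure μ x * dd ^ (m - 1)))
          ≤ (vMeasure μ x)⁻¹ * S x :=
        mul_le_mul_of_nonneg_left h1 (inv_nonneg.mpr (hvMpos x).le)
      have h4 : (vMeasure μ x)⁻¹ * (-(vMeasure μ x * dd ^ (m - 1))) = -(dd ^ (m - 1)) := by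
        rw [mul_neg, inv_mul_cancel_left₀ (hvMpos x).ne']
      rw [h4] at h3
      linarith
    -- compare gradNorm ^ q with (B * dd) ^ q
    have hgq : (B * dd) ^ q ≤ gradNorm μ u x ^ q := by
      rcases le_or_gt 0 q with hq0 | hq0
      · -- lower bound on the gradient
        have hBval : B = (Real.sqrt (2 * p₀))⁻¹ := by rw [hBdef, if_pos hq0]
        have hμn := hμlb x (nxt x) ((hmemN x (nxt x)).1 (hnxtmem x))
        have hTlb : (B * dd) ^ 2 ≤ T x := by
          have h0 : μ x (nxt x) / (2 * vMeasure μ x) * (u (nxt x) - u x) ^ 2 ≤ T x :=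
            Finset.single_le_sum (hTnn x) (hnxtmem x)
          have h5 : (u (nxt x) - u x) ^ 2 = dd ^ 2 := by rw [hdd_def]; ring
          rw [h5] at h0
          refine le_trans ?_ h0
          have hB2 : B ^ 2 = (2 * p₀)⁻¹ := by
            rw [hBval, inv_pow, Real.sq_sqrt (by linarith : (0:ℝ) ≤ 2 * p₀)]
          have h6 : vMeasure μ x ≤ μ x (nxt x) * p₀ := by
            rw [div_le_iff₀ hp₀pos] at hμn
            linarith
          have h7 : (B * dd) ^ 2 = dd ^ 2 * (2 * p₀)⁻¹ := by
            rw [mul_pow, hB2]; ring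
          rw [h7, div_mul_eq_mul_div, ← sub_nonneg]
          have hvm := hvMpos x
          have key : μ x (nxt x) * dd ^ 2 / (2 * vMeasure μ x) - dd ^ 2 * (2 * p₀)⁻¹
              = (μ x (nxt x) * p₀ - vMeasure μ x) * dd ^ 2 / (2 * vMeasure μ x * p₀) := by
            field_simp
          rw [key]
          apply div_nonneg (mul_nonneg (sub_nonneg.mpr h6) (sq_nonneg dd))
          positivity
        have hgLow : B * dd ≤ gradNorm μ u x := by
          rw [hgT x]
          calc B * dd = Real.sqrt ((B * dd) ^ 2) :=
                (Real.sqrt_sq (by positivity)).symm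
            _ ≤ Real.sqrt (T x) := Real.sqrt_le_sqrt hTlb
        exact Real.rpow_le_rpow (by positivity) hgLow hq0
      · -- upper bound on the gradient
        have hBval : B = P / Real.sqrt 2 := by rw [hBdef, if_neg (not_le.mpr hq0)]
        -- every upward jump is at most P * dd
        have hup : ∀ y ∈ (hlf x).toFinset, u y - u x ≤ P * dd := by
          intro y hy
          rcases le_or_gt (u y) (u x) with h | h
          · nlinarith
          · have ht : 0 < u y - u x := by linarith
            have hterm_y : μ x y * |u y - u x| ^ (m - 2) * (u y - u x)
                = μ x y * (u y - u x) ^ (m - 1) := by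
              rw [abs_of_pos ht, show m - 1 = (m - 2) + 1 by ring,
                Real.rpow_add_one ht.ne']
              ring
            have hsplit := Finset.add_sum_erase (hlf x).toFinset
              (fun z => μ x z * |u z - u x| ^ (m - 2) * (u z - u x)) hy
            have herase : -(vMeasure μ x * dd ^ (m - 1))
                ≤ ∑ z ∈ ((hlf x).toFinset).erase y,
                    μ x z * |u z - u x| ^ (m - 2) * (u z - u x) := by
              have h8 : ∑ z ∈ ((hlf x).toFinset).erase y, -(μ x z * dd ^ (m - 1))
                  ≤ ∑ z ∈ ((hlf x).toFinset).erase y,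
                      μ x z * |u z - u x| ^ (m - 2) * (u z - u x) :=
                Finset.sum_le_sum (fun z hz =>
                  hterm x dd hdd hdle z (Finset.mem_of_mem_erase hz))
              have h9 : ∑ z ∈ ((hlf x).toFinset).erase y, μ x z ≤ vMeasure μ x := by
                rw [hvM x]
                exact Finset.sum_le_sum_of_subset_of_nonneg (Finset.erase_subset _ _)
                  (fun z _ _ => hnonneg x z)
              have h10 : ∑ z ∈ ((hlf x).toFinset).erase y, -(μ x z * dd ^ (m - 1))
                  = -((∑ z ∈ ((hlf x).toFinset).erase y, μ x z) * dd ^ (m - 1)) := by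
                rw [Finset.sum_neg_distrib, Finset.sum_mul]
              have h11 := mul_le_mul_of_nonneg_right h9 (Real.rpow_nonneg hdd.le (m - 1))
              rw [h10] at h8
              linarith
            have hS0 : (∑ z ∈ (hlf x).toFinset,
                μ x z * |u z - u x| ^ (m - 2) * (u z - u x)) ≤ 0 := hSnonpos x
            rw [hterm_y] at hsplit
            have h12 : μ x y * (u y - u x) ^ (m - 1)
                ≤ vMeasure μ x * dd ^ (m - 1) := by linarith
            have hμy := hμlb x y ((hmemN x y).1 hy)
            have h13 : vMeasure μ x / p₀ * (u y - u x) ^ (m - 1)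
                ≤ vMeasure μ x * dd ^ (m - 1) :=
              le_trans (mul_le_mul_of_nonneg_right hμy (Real.rpow_nonneg ht.le _)) h12
            have h14 : (u y - u x) ^ (m - 1) ≤ p₀ * dd ^ (m - 1) := by
              have hvm := hvMpos x
              rw [div_mul_eq_mul_div, div_le_iff₀ hp₀pos] at h13
              have h15 : vMeasure μ x * (u y - u x) ^ (m - 1)
                  ≤ vMeasure μ x * (p₀ * dd ^ (m - 1)) := by
                rw [mul_comm p₀ (dd ^ (m-1)), ← mul_assoc]
                linarith
              exact le_of_mul_le_mul_left h15 hvm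
            have hPd : (P * dd) ^ (m - 1) = p₀ * dd ^ (m - 1) := by
              rw [Real.mul_rpow hPpos.le hdd.le, hPdef, ← Real.rpow_mul hp₀pos.le,
                inv_mul_cancel₀ hm1.ne', Real.rpow_one]
            rw [← hPd] at h14
            have := (Real.rpow_le_rpow_iff ht.le (by positivity) hm1).1 h14
            linarith
        have habs2 : ∀ y ∈ (hlf x).toFinset, (u y - u x) ^ 2 ≤ (P * dd) ^ 2 := by
          intro y hy
          have h14 := hup y hy
          have h15 : -(P * dd) ≤ u y - u x := by
            have := hdle y hy
            nlinarith
          exact sq_le_sq' h15 h14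
        have hTub : T x ≤ (B * dd) ^ 2 := by
          have h16 : T x ≤ ∑ y ∈ (hlf x).toFinset,
              μ x y / (2 * vMeasure μ x) * (P * dd) ^ 2 :=
            Finset.sum_le_sum (fun y hy => mul_le_mul_of_nonneg_left (habs2 y hy)
              (div_nonneg (hnonneg x y) (by linarith [hvMpos x])))
          have h17 : ∑ y ∈ (hlf x).toFinset, μ x y / (2 * vMeasure μ x) * (P * dd) ^ 2
              = (P * dd) ^ 2 / 2 := by
            rw [← Finset.sum_mul, ← Finset.sum_div, ← hvM x]
            have hvm := (hvMpos x).ne'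
            field_simp
          have h18 : (P * dd) ^ 2 / 2 = (B * dd) ^ 2 := by
            rw [hBval]
            rw [div_mul_eq_mul_div, div_pow, mul_pow P dd,
              Real.sq_sqrt (by norm_num : (0:ℝ) ≤ 2)]
          exact (h16.trans_eq h17).trans_eq h18
        have hgub : gradNorm μ u x ≤ B * dd := by
          rw [hgT x]
          calc Real.sqrt (T x) ≤ Real.sqrt ((B * dd) ^ 2) := Real.sqrt_le_sqrt hTub
            _ = B * dd := Real.sqrt_sq (by positivity)
        exact Real.rpow_le_rpow_of_nonpos (hgrad x hq0) hgub hq0.le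
    -- combine
    have h19 : u x ^ p * (B * dd) ^ q ≤ dd ^ (m - 1) :=
      le_trans (mul_le_mul_of_nonneg_left hgq (Real.rpow_nonneg (hu x).le p)) hI
    have h20 : (B * dd) ^ q = B ^ q * dd ^ q := Real.mul_rpow hBpos.le hdd.le
    have h21 : dd ^ (m - 1) = dd ^ (m - 1 - q) * dd ^ q := by
      rw [← Real.rpow_add hdd]
      congr 1
      ring
    rw [h20, h21, ← mul_assoc] at h19
    exact ⟨hdd, le_of_mul_le_mul_right h19 (Real.rpow_pos_of_pos hdd q)⟩
  -- the "no strictly lower neighbor" case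
  have hnolow : ∀ x : V, (∀ y ∈ (hlf x).toFinset, u x ≤ u y) →
      0 < q ∧ ∀ y ∈ (hlf x).toFinset, u y = u x := by
    intro x hge
    have hSnn : 0 ≤ S x := Finset.sum_nonneg (fun y hy =>
      mul_nonneg (mul_nonneg (hnonneg x y) (Real.rpow_nonneg (abs_nonneg _) _))
        (sub_nonneg.mpr (hge y hy)))
    have h1 : u x ^ p * gradNorm μ u x ^ q ≤ 0 := by
      have h2 := hSle x
      have h3 : 0 ≤ (vMeasure μ x)⁻¹ * S x :=
        mul_nonneg (inv_nonneg.mpr (hvMpos x).le) hSnn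
      linarith
    have hupow : 0 < u x ^ p := Real.rpow_pos_of_pos (hu x) p
    have hgq00 : gradNorm μ u x ^ q = 0 := by
      have h5 : 0 ≤ gradNorm μ u x ^ q := Real.rpow_nonneg (hgnn x) q
      nlinarith
    have hq0 : q ≠ 0 := by
      rintro rfl
      rw [Real.rpow_zero] at hgq00
      norm_num at hgq00
    have hg0 : gradNorm μ u x = 0 := by
      by_contra h
      have h6 : 0 < gradNorm μ u x := lt_of_le_of_ne (hgnn x) (Ne.symm h)
      exact absurd hgq00 (ne_of_gt (Real.rpow_pos_of_pos h6 q))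
    have hqpos : 0 < q := by
      rcases lt_trichotomy q 0 with h | h | h
      · exact absurd hg0 (ne_of_gt (hgrad x h))
      · exact absurd h hq0
      · exact h
    refine ⟨hqpos, ?_⟩
    have hTnn' : 0 ≤ T x := Finset.sum_nonneg (hTnn x)
    have hT0 : T x = 0 := by
      have h7 := hgT x
      rw [hg0] at h7
      exact (Real.sqrt_eq_zero hTnn').mp h7.symm
    intro y hy
    have h8 := (Finset.sum_eq_zero_iff_of_nonneg (hTnn x)).mp hT0 y hy
    have hμpos : 0 < μ x y := (hadj x y).2 ((hmemN x y).1 hy)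
    have hcoef : 0 < μ x y / (2 * vMeasure μ x) :=
      div_pos hμpos (by linarith [hvMpos x])
    have h9 : (u y - u x) ^ 2 = 0 := (mul_eq_zero.mp h8).resolve_left (ne_of_gt hcoef)
    have := sq_eq_zero_iff.mp h9
    linarith [this]
  -- case split on the region
  rcases hreg with ⟨hpq, hq'⟩ | ⟨hp', hq'⟩
  · -- region: p < m - 1 - q, q < m - 1
    have hs1 : (0:ℝ) < m - 1 - q := by linarith
    have hs2 : (0:ℝ) < m - 1 - q - p := by linarith
    set c : ℝ := (B ^ q) ^ (m - 1 - q - p)⁻¹ with hcdef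
    have hBq : 0 < B ^ q := Real.rpow_pos_of_pos hBpos q
    have hcpos : 0 < c := Real.rpow_pos_of_pos hBq _
    have hlbc : ∀ x, (∃ y ∈ (hlf x).toFinset, u y < u x) → c ≤ u x := by
      intro x hlow
      obtain ⟨hdd, hkey⟩ := hmain x hlow
      have hdlt : u x - u (nxt x) ≤ u x := by linarith [hu (nxt x)]
      have h1 : (u x - u (nxt x)) ^ (m - 1 - q) ≤ u x ^ (m - 1 - q) :=
        Real.rpow_le_rpow hdd.le hdlt hs1.le
      have h2 : u x ^ p * B ^ q ≤ u x ^ (m - 1 - q) := le_trans hkey h1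
      have h3 : B ^ q ≤ u x ^ (m - 1 - q - p) := by
        have h4 : u x ^ (m - 1 - q) = u x ^ (m - 1 - q - p) * u x ^ p := by
          rw [← Real.rpow_add (hu x)]
          congr 1
          ring
        rw [h4, mul_comm (u x ^ p) (B ^ q)] at h2
        exact le_of_mul_le_mul_right h2 (Real.rpow_pos_of_pos (hu x) p)
      calc c = (B ^ q) ^ (m - 1 - q - p)⁻¹ := rfl
        _ ≤ (u x ^ (m - 1 - q - p)) ^ (m - 1 - q - p)⁻¹ :=
            Real.rpow_le_rpow hBq.le h3 (inv_nonneg.mpr hs2.le)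
        _ = u x := by
            rw [← Real.rpow_mul (hu x).le, mul_inv_cancel₀ hs2.ne', Real.rpow_one]
    -- adjacency forces equality
    have hadjeq : ∀ a b : V, G.Adj a b → u a = u b := by
      intro a b hab
      by_contra hne_ab
      have hfalse : ∀ a b : V, G.Adj a b → u b < u a → False := by
        clear hab hne_ab a b
        intro a b hab hblt
        set f : ℕ → V := fun k => nxt^[k] a with hfdef
        have hf0 : f 0 = a := rfl
        have hfs : ∀ k, f (k + 1) = nxt (f k) :=
          fun k => Function.iterate_succ_apply' nxt k a
        have hinv : ∀ k, ∃ y ∈ (hlf (f k)).toFinset, u y < u (f k) := by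
          intro k
          induction k with
          | zero => exact ⟨b, (hmemN a b).2 hab, hblt⟩
          | succ n ih =>
            obtain ⟨y, hy, hylt⟩ := ih
            have hlt : u (f (n + 1)) < u (f n) := by
              rw [hfs n]
              exact lt_of_le_of_lt (hnxtmin (f n) y hy) hylt
            have hmem : f n ∈ (hlf (f (n + 1))).toFinset := by
              have h1 : G.Adj (f n) (nxt (f n)) := (hmemN _ _).1 (hnxtmem (f n))
              rw [hfs n]
              exact (hmemN _ _).2 (G.adj_symm h1)
            by_contra hno
            push_neg at hno
            have h2 := (hnolow (f (n + 1)) (fun z hz => hno z hz)).2 (f n) hmem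
            linarith
        have hdec : ∀ k, u (f (k + 1)) < u (f k) := by
          intro k
          obtain ⟨y, hy, hylt⟩ := hinv k
          rw [hfs k]
          exact lt_of_le_of_lt (hnxtmin (f k) y hy) hylt
        have hub : ∀ k, u (f k) ≤ u a := by
          intro k
          induction k with
          | zero => exact le_of_eq rfl
          | succ n ih => exact le_trans (hdec n).le ih
        have hlb : ∀ k, c ≤ u (f k) := fun k => hlbc (f k) (hinv k)
        set A : ℝ := min (c ^ p) (u a ^ p) with hAdef
        have hApos : 0 < A :=
          lt_min (Real.rpow_pos_of_pos hcpos p) (Real.rpow_pos_of_pos (hu a) p)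
        have hAle : ∀ k, A ≤ u (f k) ^ p := by
          intro k
          rcases le_or_gt 0 p with hp0 | hp0
          · exact le_trans (min_le_left _ _) (Real.rpow_le_rpow hcpos.le (hlb k) hp0)
          · exact le_trans (min_le_right _ _)
              (Real.rpow_le_rpow_of_nonpos (hu (f k)) (hub k) hp0.le)
        set δ : ℝ := (A * B ^ q) ^ (m - 1 - q)⁻¹ with hδdef
        have hδpos : 0 < δ := Real.rpow_pos_of_pos (mul_pos hApos hBq) _
        have hstep : ∀ k, δ ≤ u (f k) - u (f (k + 1)) := by
          intro k
          obtain ⟨hdd, hkey⟩ := hmain (f k) (hinv k)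
          have h1 : A * B ^ q ≤ (u (f k) - u (nxt (f k))) ^ (m - 1 - q) :=
            le_trans (mul_le_mul_of_nonneg_right (hAle k) hBq.le) hkey
          have h2 : δ ≤ u (f k) - u (nxt (f k)) := by
            calc δ = (A * B ^ q) ^ (m - 1 - q)⁻¹ := rfl
              _ ≤ ((u (f k) - u (nxt (f k))) ^ (m - 1 - q)) ^ (m - 1 - q)⁻¹ :=
                  Real.rpow_le_rpow (mul_pos hApos hBq).le h1 (inv_nonneg.mpr hs1.le)
              _ = u (f k) - u (nxt (f k)) := by
                  rw [← Real.rpow_mul hdd.le, mul_inv_cancel₀ hs1.ne', Real.rpow_one]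
          rw [hfs k]
          exact h2
        have hsum : ∀ k : ℕ, u (f k) ≤ u a - k * δ := by
          intro k
          induction k with
          | zero => simp [hf0]
          | succ n ih =>
            have h1 := hstep n
            push_cast
            push_cast at ih
            linarith
        obtain ⟨k, hk⟩ := exists_nat_gt ((u a - c) / δ)
        have h1 : u a - c < k * δ := by
          rw [div_lt_iff₀ hδpos] at hk
          linarith
        have h2 := hlb k
        have h3 := hsum k
        linarith
      rcases lt_or_gt_of_ne hne_ab with h | h
      · exact hfalse b a (G.adj_symm hab) h
      · exact hfalse a b hab h
    obtain ⟨x₀⟩ := (inferInstance : Nonempty V)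
    have key : ∀ {a b : V}, G.Walk a b → u a = u b := by
      intro a b w
      induction w with
      | nil => rfl
      | cons h pw ih => exact (hadjeq _ _ h).trans ih
    exact ⟨u x₀, fun x => key (hconn.preconnected x x₀).some⟩
  · -- region: p = m - 1, q = 0 : the hypotheses are contradictory
    exfalso
    obtain ⟨x⟩ := (inferInstance : Nonempty V)
    by_cases hlow : ∃ y ∈ (hlf x).toFinset, u y < u x
    · obtain ⟨hdd, hkey⟩ := hmain x hlow
      rw [hq', hp', Real.rpow_zero, mul_one, sub_zero] at hkey
      have h1 : u x ≤ u x - u (nxt x) :=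
        (Real.rpow_le_rpow_iff (hu x).le hdd.le hm1).1 hkey
      linarith [hu (nxt x)]
    · push_neg at hlow
      have h2 := (hnolow x (fun y hy => hlow y hy)).1
      rw [hq'] at h2
      exact lt_irrefl 0 h2
end

section
/- Let m>1 and suppose p < 0 and q = m−1 (region G₄). Then for every λ>0 there exists an edge weight μ on the homogeneous tree T_N and a nonconstant positive function u on T_N such that W_o(n) ≍ e^{λ n} for all n ≥ 2, and u satisfies Δ_m u(x) + u(x)^p·|∇u(x)|^q ≤ 0 at every vertex x of T_N; i.e., (★) admits a nontrivial positive solution on (T_N, μ). -/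
variable {V : Type*}

open Classical in
/-- `W_o(n)`: the sum of `μ_{xy}` over pairs `(x,y)` with `x ∈ B(o,n)`, `y ∈ V`
and `d(o,x) < d(o,y)`. -/
noncomputable def Wvol (G : SimpleGraph V) (μ : V → V → ℝ) (o : V) (n : ℕ) : ℝ :=
  ∑ᶠ x, ∑ᶠ y, if G.dist o x ≤ n ∧ G.dist o x < G.dist o y then μ x y else 0

set_option linter.unusedSectionVars false

open SimpleGraph

namespace St14

variable {V : Type*} [DecidableEq V] {G : SimpleGraph V} {o : V}

lemma exists_shortest (hc : G.Connected) (o x : V) :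
    ∃ p : G.Walk o x, p.IsPath ∧ p.length = G.dist o x := by
  obtain ⟨q, hq⟩ := hc.exists_walk_length_eq_dist o x
  refine ⟨q.bypass, q.bypass_isPath, le_antisymm ?_ (SimpleGraph.dist_le _)⟩
  calc q.bypass.length ≤ q.length := q.length_bypass_le
    _ = G.dist o x := hq

lemma dist_lt_of_mem_support {x y : V} (p : G.Walk o x)
    (hlen : p.length = G.dist o x) (hy : y ∈ p.support) (hyx : y ≠ x) :
    G.dist o y < G.dist o x := by
  have hsplit := p.take_spec hy
  have hlen2 : (p.takeUntil y hy).length + (p.dropUntil y hy).length = p.length := by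
    rw [← Walk.length_append, hsplit]
  have hdrop : 0 < (p.dropUntil y hy).length := by
    rcases Nat.eq_zero_or_pos (p.dropUntil y hy).length with h | h
    · exact absurd (Walk.eq_of_length_eq_zero h) hyx
    · exact h
  have h3 := SimpleGraph.dist_le (p.takeUntil y hy)
  omega

lemma isPath_concat {u v w : V} {p : G.Walk u v} (hp : p.IsPath) (h : G.Adj v w)
    (hw : w ∉ p.support) : (p.concat h).IsPath := by
  rw [Walk.isPath_def, Walk.support_concat]
  rw [List.nodup_append]
  refine ⟨hp.support_nodup, List.nodup_singleton _, ?_⟩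
  intro a ha b hb hab
  simp only [List.mem_singleton] at hb
  subst hb
  subst hab
  exact hw ha

lemma adj_dist_ne (ht : G.IsTree) {x y : V} (h : G.Adj x y) :
    G.dist o x ≠ G.dist o y := by
  intro he
  obtain ⟨p, hp, hpl⟩ := exists_shortest ht.isConnected o x
  obtain ⟨qw, hq, hql⟩ := exists_shortest ht.isConnected o y
  have hxq : x ∉ qw.support := by
    intro hmem
    have := dist_lt_of_mem_support qw hql hmem h.ne
    omega
  have hr : (qw.concat h.symm).IsPath := isPath_concat hq h.symm hxq
  have hueq : p = qw.concat h.symm := by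
    have := (isAcyclic_iff_path_unique.mp ht.IsAcyclic) ⟨p, hp⟩ ⟨qw.concat h.symm, hr⟩
    exact congrArg Subtype.val this
  have : p.length = qw.length + 1 := by rw [hueq, Walk.length_concat]
  omega

lemma adj_dist_cases (ht : G.IsTree) {x y : V} (h : G.Adj x y) :
    G.dist o y + 1 = G.dist o x ∨ G.dist o y = G.dist o x + 1 := by
  have h1 : G.dist o y ≤ G.dist o x + 1 := by
    have := ht.isConnected.dist_triangle (u := o) (v := x) (w := y)
    rwa [SimpleGraph.dist_eq_one_iff_adj.mpr h] at this
  have h2 : G.dist o x ≤ G.dist o y + 1 := by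
    have := ht.isConnected.dist_triangle (u := o) (v := y) (w := x)
    rwa [SimpleGraph.dist_eq_one_iff_adj.mpr h.symm] at this
  have h3 := adj_dist_ne (o := o) ht h
  omega

lemma parent_unique (ht : G.IsTree) {x y₁ y₂ : V} (h₁ : G.Adj x y₁) (h₂ : G.Adj x y₂)
    (hd₁ : G.dist o y₁ + 1 = G.dist o x) (hd₂ : G.dist o y₂ + 1 = G.dist o x) :
    y₁ = y₂ := by
  by_contra hne
  obtain ⟨q₁, hq₁, hl₁⟩ := exists_shortest ht.isConnected o y₁
  obtain ⟨q₂, hq₂, hl₂⟩ := exists_shortest ht.isConnected o y₂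
  have hx1 : x ∉ q₁.support := by
    intro hm
    have hxy : x ≠ y₁ := by rintro rfl; omega
    have := dist_lt_of_mem_support q₁ hl₁ hm hxy
    omega
  have hx2 : x ∉ q₂.support := by
    intro hm
    have hxy : x ≠ y₂ := by rintro rfl; omega
    have := dist_lt_of_mem_support q₂ hl₂ hm hxy
    omega
  have hr₁ : (q₁.concat h₁.symm).IsPath := isPath_concat hq₁ h₁.symm hx1
  have hr₂ : (q₂.concat h₂.symm).IsPath := isPath_concat hq₂ h₂.symm hx2
  have hueq : q₁.concat h₁.symm = q₂.concat h₂.symm := by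
    have := (isAcyclic_iff_path_unique.mp ht.IsAcyclic)
      ⟨q₁.concat h₁.symm, hr₁⟩ ⟨q₂.concat h₂.symm, hr₂⟩
    exact congrArg Subtype.val this
  have hy1 : y₁ ∈ (q₂.concat h₂.symm).support := by
    rw [← hueq, Walk.support_concat]
    exact List.mem_append.mpr (Or.inl q₁.end_mem_support)
  rw [Walk.support_concat, List.mem_append] at hy1
  rcases hy1 with hy1 | hy1
  · have := dist_lt_of_mem_support q₂ hl₂ hy1 hne
    omega
  · simp only [List.mem_singleton] at hy1
    subst hy1
    omega

lemma getVert_mem_support {u v : V} (p : G.Walk u v) (i : ℕ) :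
    p.getVert i ∈ p.support := by
  induction p generalizing i with
  | nil => cases i <;> simp [Walk.getVert]
  | cons h q ih =>
    cases i with
    | zero => simp [Walk.getVert]
    | succ n =>
      rw [Walk.getVert_cons_succ, Walk.support_cons]
      exact List.mem_cons_of_mem _ (ih n)

lemma parent_exists (hc : G.Connected) {x : V} (hx : G.dist o x ≠ 0) :
    ∃ y, G.Adj x y ∧ G.dist o y + 1 = G.dist o x := by
  obtain ⟨p, hp, hlen⟩ := exists_shortest hc o x
  have hL : 0 < p.length := by omega
  set y := p.getVert (p.length - 1) with hy
  have hadj : G.Adj y x := by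
    have := p.adj_getVert_succ (i := p.length - 1) (by omega)
    rwa [show p.length - 1 + 1 = p.length by omega, p.getVert_length] at this
  have hmem : y ∈ p.support := getVert_mem_support p _
  have hlt := dist_lt_of_mem_support p hlen hmem hadj.ne
  have hle : G.dist o x ≤ G.dist o y + 1 := by
    have := hc.dist_triangle (u := o) (v := y) (w := x)
    rwa [SimpleGraph.dist_eq_one_iff_adj.mpr hadj] at this
  exact ⟨y, hadj.symm, by omega⟩

variable {N : ℕ}

lemma nbr_finite (hreg : ∀ v, (G.neighborSet v).ncard = N) (hN : 2 ≤ N) (x : V) :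
    (G.neighborSet x).Finite := by
  by_contra h
  have h2 : (G.neighborSet x).ncard = 0 := Set.Infinite.ncard h
  rw [hreg x] at h2
  omega

lemma sum_nbr {x : V} (hfin : (G.neighborSet x).Finite) (f : V → ℝ)
    (hsupp : ∀ y, ¬ G.Adj x y → f y = 0) :
    ∑ᶠ y, f y = ∑ y ∈ hfin.toFinset, f y := by
  apply finsum_eq_sum_of_support_subset
  intro y hy
  simp only [Set.Finite.coe_toFinset, SimpleGraph.mem_neighborSet]
  by_contra hadj
  exact hy (hsupp y hadj)

lemma sum_at_root (hreg : ∀ v, (G.neighborSet v).ncard = N) (hN : 2 ≤ N)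
    (f : V → ℝ) (b : ℝ)
    (hsupp : ∀ y, ¬ G.Adj o y → f y = 0)
    (hb : ∀ y, G.Adj o y → f y = b) :
    ∑ᶠ y, f y = N * b := by
  rw [sum_nbr (nbr_finite hreg hN o) f hsupp]
  rw [Finset.sum_congr rfl (fun y hy => hb y (by
    simpa [Set.Finite.mem_toFinset] using hy))]
  rw [Finset.sum_const, nsmul_eq_mul]
  congr 1
  rw [← Set.ncard_eq_toFinset_card _ (nbr_finite hreg hN o), hreg o]

lemma sum_at_vertex (ht : G.IsTree) (hreg : ∀ v, (G.neighborSet v).ncard = N)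
    (hN : 2 ≤ N) {x : V} (hx : G.dist o x ≠ 0)
    (f : V → ℝ) (a b : ℝ)
    (hsupp : ∀ y, ¬ G.Adj x y → f y = 0)
    (ha : ∀ y, G.Adj x y → G.dist o y + 1 = G.dist o x → f y = a)
    (hb : ∀ y, G.Adj x y → G.dist o y = G.dist o x + 1 → f y = b) :
    ∑ᶠ y, f y = a + ((N : ℝ) - 1) * b := by
  obtain ⟨y₀, hy₀, hd₀⟩ := parent_exists ht.isConnected hx
  have hfin := nbr_finite hreg hN x
  have hy₀s : y₀ ∈ hfin.toFinset := by
    simp only [Set.Finite.mem_toFinset, SimpleGraph.mem_neighborSet]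
    exact hy₀
  rw [sum_nbr hfin f hsupp, ← Finset.add_sum_erase _ f hy₀s, ha y₀ hy₀ hd₀]
  congr 1
  have hconst : ∀ y ∈ hfin.toFinset.erase y₀, f y = b := by
    intro y hy
    obtain ⟨hyne, hymem⟩ := Finset.mem_erase.mp hy
    rw [Set.Finite.mem_toFinset, SimpleGraph.mem_neighborSet] at hymem
    rcases adj_dist_cases (o := o) ht hymem with hc | hc
    · exact absurd (parent_unique ht hymem hy₀ hc hd₀) hyne
    · exact hb y hymem hc
  rw [Finset.sum_congr rfl hconst, Finset.sum_const, nsmul_eq_mul]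
  congr 1
  rw [Finset.card_erase_of_mem hy₀s, ← Set.ncard_eq_toFinset_card _ hfin, hreg x]
  have : (1:ℕ) ≤ N := by omega
  push_cast [Nat.cast_sub this]
  ring

lemma sphere_finite (ht : G.IsTree) (hreg : ∀ v, (G.neighborSet v).ncard = N)
    (hN : 2 ≤ N) : ∀ r : ℕ, {x | G.dist o x = r}.Finite := by
  intro r
  induction r with
  | zero =>
    apply Set.Finite.subset (Set.finite_singleton o)
    intro x hx
    simp only [Set.mem_setOf_eq] at hx
    have := (ht.isConnected.dist_eq_zero_iff).mp hx
    simp [← this]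
  | succ r ih =>
    apply Set.Finite.subset (Set.Finite.biUnion ih (fun y _ => nbr_finite hreg hN y))
    intro x hx
    simp only [Set.mem_setOf_eq] at hx
    obtain ⟨y, hadj, hd⟩ := parent_exists (o := o) ht.isConnected (x := x) (by omega)
    refine Set.mem_biUnion (show y ∈ {z | G.dist o z = r} from by
      simp only [Set.mem_setOf_eq]; omega) hadj.symm

lemma sphere_ncard (ht : G.IsTree) (hreg : ∀ v, (G.neighborSet v).ncard = N)
    (hN : 2 ≤ N) : ∀ r : ℕ, 1 ≤ r → {x | G.dist o x = r}.ncard = N * (N-1)^(r-1) := by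
  have hP : ∀ y : V, G.dist o y ≠ 0 → ∃ z, G.Adj y z ∧ G.dist o z + 1 = G.dist o y :=
    fun y hy => parent_exists ht.isConnected hy
  classical
  set P : V → V := fun y => if h : G.dist o y = 0 then o else (hP y h).choose with hPdef
  have hPspec : ∀ y : V, G.dist o y ≠ 0 → G.Adj y (P y) ∧ G.dist o (P y) + 1 = G.dist o y := by
    intro y hy
    simp only [hPdef, dif_neg hy]
    exact (hP y hy).choose_spec
  intro r
  induction r with
  | zero => omega
  | succ r ih =>
    intro _
    rcases Nat.eq_zero_or_pos r with rfl | hr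
    · -- sphere 1 = neighbors of o
      have : {x | G.dist o x = 1} = G.neighborSet o := by
        ext x
        simp only [Set.mem_setOf_eq, SimpleGraph.mem_neighborSet]
        exact SimpleGraph.dist_eq_one_iff_adj
      rw [this, hreg o]
      simp
    · have ihr := ih hr
      set S := (sphere_finite (o := o) ht hreg hN r).toFinset with hSdef
      set T := (sphere_finite (o := o) ht hreg hN (r+1)).toFinset with hTdef
      have hmemS : ∀ x, x ∈ S ↔ G.dist o x = r := by
        intro x; simp [hSdef, Set.Finite.mem_toFinset]
      have hmemT : ∀ x, x ∈ T ↔ G.dist o x = r + 1 := by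
        intro x; simp [hTdef, Set.Finite.mem_toFinset]
      have hfib : T.card = ∑ x ∈ S, (T.filter fun y => P y = x).card := by
        apply Finset.card_eq_sum_card_fiberwise
        intro y hy
        rw [Finset.mem_coe, hmemT] at hy
        have := hPspec y (by omega)
        rw [Finset.mem_coe, hmemS]
        omega
      have hfibcard : ∀ x ∈ S, (T.filter fun y => P y = x).card = N - 1 := by
        intro x hx
        rw [hmemS] at hx
        have hxne : G.dist o x ≠ 0 := by omega
        obtain ⟨hadjPx, hdPx⟩ := hPspec x hxne
        have hfx := nbr_finite hreg hN x
        have key : T.filter (fun y => P y = x) = hfx.toFinset.erase (P x) := by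
          ext y
          simp only [Finset.mem_filter, Finset.mem_erase, Set.Finite.mem_toFinset,
            SimpleGraph.mem_neighborSet, hmemT]
          constructor
          · rintro ⟨hyT, hPy⟩
            obtain ⟨hadjy, hdy⟩ := hPspec y (by omega)
            rw [hPy] at hadjy
            refine ⟨?_, hadjy.symm⟩
            intro hyPx
            rw [hyPx] at hyT
            omega
          · rintro ⟨hyne, hadjy⟩
            rcases adj_dist_cases (o := o) ht hadjy with hc | hc
            · exact absurd (parent_unique ht hadjy hadjPx hc hdPx) hyne
            · have hyT : G.dist o y = r + 1 := by omega
              obtain ⟨hadjy2, hdy2⟩ := hPspec y (by omega)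
              exact ⟨hyT, parent_unique (o := o) ht hadjy2 hadjy.symm (by omega) (by omega)⟩
        rw [key, Finset.card_erase_of_mem (by
          simp only [Set.Finite.mem_toFinset, SimpleGraph.mem_neighborSet]; exact hadjPx)]
        rw [← Set.ncard_eq_toFinset_card _ hfx, hreg x]
      have hTcard : T.card = (N - 1) * S.card := by
        rw [hfib, Finset.sum_congr rfl hfibcard, Finset.sum_const, smul_eq_mul, mul_comm]
      have hScard : S.card = N * (N-1)^(r-1) := by
        rw [hSdef, ← Set.ncard_eq_toFinset_card _ (sphere_finite (o := o) ht hreg hN r)]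
        exact ihr
      rw [Set.ncard_eq_toFinset_card _ (sphere_finite (o := o) ht hreg hN (r+1)), ← hTdef,
        hTcard, hScard]
      have : r + 1 - 1 = (r - 1) + 1 := by omega
      rw [this, pow_succ]
      ring
end St14

set_option maxHeartbeats 1000000 in
theorem statement14
    (V : Type*) (G : SimpleGraph V) (N : ℕ) (hN : 2 ≤ N)
    (htree : G.IsTree) (hreg : ∀ v, (G.neighborSet v).ncard = N)
    (o : V)
    (m p q : ℝ) (hm : 1 < m)
    (hp : p < 0) (hq : q = m - 1)
    (lam : ℝ) (hlam : 0 < lam) :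
    ∃ μ : V → V → ℝ,
      (∀ x y, μ x y = μ y x) ∧
      (∀ x y, 0 < μ x y ↔ G.Adj x y) ∧
      (∀ x y, ¬ G.Adj x y → μ x y = 0) ∧
      ∃ u : V → ℝ,
        (∀ x, 0 < u x) ∧ (∃ x y, u x ≠ u y) ∧
        (∀ x, q < 0 → 0 < gradNorm μ u x) ∧
        (∀ x, lapM μ m u x + u x ^ p * gradNorm μ u x ^ q ≤ 0) ∧
        ∃ c C : ℝ, 0 < c ∧ 0 < C ∧ ∀ n : ℕ, 2 ≤ n →
          c * (Real.exp (lam * n)) ≤ Wvol G μ o n ∧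
          Wvol G μ o n ≤
            C * (Real.exp (lam * n)) := by
  classical
  have hm1 : (0:ℝ) < m - 1 := by linarith
  have hNR : (0:ℝ) < (N:ℝ) - 1 := by
    have : (2:ℝ) ≤ (N:ℝ) := by exact_mod_cast hN
    linarith
  set t : ℝ := Real.exp lam with htdef
  have ht1 : 1 < t := by
    rw [htdef, show (1:ℝ) = Real.exp 0 by simp]
    exact Real.exp_lt_exp.mpr hlam
  set β : ℝ := t / ((N:ℝ) - 1) with hβdef
  have hβpos : 0 < β := div_pos (by linarith) hNR
  set ρ : ℝ := Real.exp (-(lam / (2 * (m - 1)))) with hρdef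
  have hρpos : 0 < ρ := Real.exp_pos _
  have hρlt : ρ < 1 := by
    rw [hρdef]
    apply Real.exp_lt_one_iff.mpr
    have : 0 < lam / (2 * (m-1)) := by positivity
    linarith
  set σ : ℝ := Real.exp (-(lam / 2)) with hσdef
  have hσpos : 0 < σ := Real.exp_pos _
  have hXr : ∀ r : ℕ, (ρ ^ r) ^ (m - 1) = σ ^ r := by
    intro r
    rw [hρdef, hσdef, ← Real.exp_nat_mul, ← Real.exp_nat_mul, ← Real.exp_mul]
    congr 1
    field_simp
  have hXr2 : ∀ r : ℕ, (ρ ^ r) ^ (m - 2) * ρ ^ r = σ ^ r := by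
    intro r
    have h0 : (0:ℝ) < ρ ^ r := pow_pos hρpos r
    have h1 := Real.rpow_add h0 (m-2) 1
    rw [Real.rpow_one, show m - 2 + 1 = m - 1 by ring] at h1
    rw [← h1, hXr r]
  set E : ℝ := Real.exp (lam/2) - 1 with hEdef
  have hEpos : 0 < E := by
    rw [hEdef]
    have : (1:ℝ) = Real.exp 0 := by simp
    rw [this]
    have := Real.exp_lt_exp.mpr (show (0:ℝ) < lam/2 by linarith)
    linarith [this]
  set D : ℝ := 1 + ((N:ℝ) - 1) * β with hDdef
  have hDpos : 0 < D := by positivity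
  set K : ℝ := min 1 (E / D) with hKdef
  have hKpos : 0 < K := lt_min one_pos (div_pos hEpos hDpos)
  have hK1 : K ≤ 1 := min_le_left _ _
  have hKE : K * D ≤ E := by
    have h1 : K ≤ E / D := min_le_right _ _
    calc K * D ≤ (E / D) * D := by nlinarith
      _ = E := by field_simp
  set A : ℝ := K ^ (1 / p) with hAdef
  have hA1 : (1:ℝ) ≤ A :=
    Real.one_le_rpow_of_pos_of_le_one_of_nonpos hKpos hK1 (by
      apply le_of_lt; exact div_neg_of_pos_of_neg one_pos hp)
  have hApos : 0 < A := by linarith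
  have hAp : A ^ p = K := by
    rw [hAdef, ← Real.rpow_mul hKpos.le, one_div, inv_mul_cancel₀ (ne_of_lt hp), Real.rpow_one]
  have h1ρ : (0:ℝ) < 1 - ρ := by linarith
  set u : V → ℝ := fun x => A + ρ ^ (G.dist o x) / (1 - ρ) with hudef
  set μf : V → V → ℝ := fun x y => if G.Adj x y then β ^ (min (G.dist o x) (G.dist o y)) else 0
    with hμdef
  have hupos : ∀ x, 0 < u x := by
    intro x
    have : 0 < ρ ^ (G.dist o x) / (1 - ρ) := by positivity
    simp only [hudef]
    linarith
  have huA : ∀ x, A ≤ u x := by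
    intro x
    have : 0 < ρ ^ (G.dist o x) / (1 - ρ) := by positivity
    simp only [hudef]
    linarith
  have hμsymm : ∀ x y, μf x y = μf y x := by
    intro x y
    simp only [hμdef]
    rw [SimpleGraph.adj_comm, min_comm]
  have hμzero : ∀ x y, ¬ G.Adj x y → μf x y = 0 := by
    intro x y h
    simp only [hμdef, if_neg h]
  have hμiff : ∀ x y, 0 < μf x y ↔ G.Adj x y := by
    intro x y
    constructor
    · intro h
      by_contra hadj
      rw [hμzero x y hadj] at h
      exact lt_irrefl 0 h
    · intro h
      simp only [hμdef, if_pos h]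
      positivity
  have hdiff : ∀ k : ℕ, (A + ρ ^ k / (1 - ρ)) - (A + ρ ^ (k+1) / (1 - ρ)) = ρ ^ k := by
    intro k
    rw [pow_succ]
    field_simp
    ring
  have hdisto : G.dist o o = 0 := SimpleGraph.dist_self
  -- distance of a neighbor of the root
  have hdist1 : ∀ y, G.Adj o y → G.dist o y = 1 := fun y h =>
    SimpleGraph.dist_eq_one_iff_adj.mpr h
  -- the differential inequality at non-root vertices
  have hmain : ∀ x : V, G.dist o x ≠ 0 →
      lapM μf m u x + u x ^ p * gradNorm μf u x ^ (m - 1) ≤ 0 := by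
    intro x hx0
    obtain ⟨r, hr⟩ : ∃ r, G.dist o x = r + 1 := ⟨G.dist o x - 1, by omega⟩
    have hμval_p : ∀ y, G.Adj x y → G.dist o y + 1 = G.dist o x → μf x y = β ^ r := by
      intro y hadj hdy
      simp only [hμdef, if_pos hadj]
      rw [hr, show G.dist o y = r from by omega, min_eq_right (Nat.le_succ r)]
    have hμval_c : ∀ y, G.Adj x y → G.dist o y = G.dist o x + 1 → μf x y = β ^ (r+1) := by
      intro y hadj hdy
      simp only [hμdef, if_pos hadj]
      rw [hr, show G.dist o y = r + 2 from by omega, min_eq_left (by omega)]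
    have hdiff_p : ∀ y : V, G.dist o y + 1 = G.dist o x → u y - u x = ρ ^ r := by
      intro y hdy
      simp only [hudef]
      rw [hr, show G.dist o y = r from by omega]
      exact hdiff r
    have hdiff_c : ∀ y : V, G.dist o y = G.dist o x + 1 → u y - u x = -(ρ ^ (r+1)) := by
      intro y hdy
      simp only [hudef]
      rw [hr, show G.dist o y = r + 2 from by omega]
      have := hdiff (r+1)
      linarith
    have hvM : vMeasure μf x = β ^ r + ((N:ℝ) - 1) * β ^ (r+1) := by
      apply St14.sum_at_vertex (o := o) (x := x) htree hreg hN (by omega) (fun y => μf x y)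
      · intro y h
        exact hμzero x y h
      · intro y hadj hdy
        exact hμval_p y hadj hdy
      · intro y hadj hdy
        exact hμval_c y hadj hdy
    have hvMpos : 0 < vMeasure μf x := by
      rw [hvM]; positivity
    have hlap : (∑ᶠ y, μf x y * |u y - u x| ^ (m - 2) * (u y - u x))
        = β ^ r * σ ^ r + ((N:ℝ) - 1) * (-(β ^ (r+1) * σ ^ (r+1))) := by
      apply St14.sum_at_vertex (o := o) (x := x) htree hreg hN (by omega)
      · intro y h
        simp [hμzero x y h]
      · intro y hadj hdy
        rw [hμval_p y hadj hdy, hdiff_p y hdy, abs_of_pos (pow_pos hρpos r),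
          mul_assoc, hXr2 r]
      · intro y hadj hdy
        rw [hμval_c y hadj hdy, hdiff_c y hdy, abs_neg, abs_of_pos (pow_pos hρpos (r+1)),
          show β ^ (r+1) * (ρ ^ (r+1)) ^ (m-2) * -(ρ ^ (r+1))
            = -(β ^ (r+1) * ((ρ ^ (r+1)) ^ (m-2) * ρ ^ (r+1))) by ring, hXr2 (r+1)]
    have hgs : (∑ᶠ y, μf x y / (2 * vMeasure μf x) * (u y - u x) ^ 2)
        = β ^ r / (2 * vMeasure μf x) * (ρ ^ r) ^ 2
          + ((N:ℝ) - 1) * (β ^ (r+1) / (2 * vMeasure μf x) * (ρ ^ (r+1)) ^ 2) := by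
      apply St14.sum_at_vertex (o := o) (x := x) htree hreg hN (by omega)
      · intro y h
        simp [hμzero x y h]
      · intro y hadj hdy
        rw [hμval_p y hadj hdy, hdiff_p y hdy]
      · intro y hadj hdy
        rw [hμval_c y hadj hdy, hdiff_c y hdy, neg_sq]
    have hgs_le : β ^ r / (2 * vMeasure μf x) * (ρ ^ r) ^ 2
          + ((N:ℝ) - 1) * (β ^ (r+1) / (2 * vMeasure μf x) * (ρ ^ (r+1)) ^ 2)
        ≤ (ρ ^ r) ^ 2 := by
      rw [hvM]
      have hρr : ρ ^ (r+1) ≤ ρ ^ r := pow_le_pow_of_le_one hρpos.le hρlt.le (Nat.le_succ r)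
      have h2 : (ρ ^ (r+1)) ^ 2 ≤ (ρ ^ r) ^ 2 := by nlinarith [pow_pos hρpos (r+1)]
      have heq : β ^ r / (2 * (β ^ r + ((N:ℝ) - 1) * β ^ (r+1))) * (ρ ^ r) ^ 2
          + ((N:ℝ) - 1) * (β ^ (r+1) / (2 * (β ^ r + ((N:ℝ) - 1) * β ^ (r+1))) * (ρ ^ (r+1)) ^ 2)
          = (β ^ r * (ρ ^ r) ^ 2 + ((N:ℝ) - 1) * β ^ (r+1) * (ρ ^ (r+1)) ^ 2)
            / (2 * (β ^ r + ((N:ℝ) - 1) * β ^ (r+1))) := by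
        ring
      rw [heq, div_le_iff₀ (by positivity)]
      have h3 : (0:ℝ) ≤ β ^ r * (ρ ^ r) ^ 2 := by positivity
      have h4 : (0:ℝ) ≤ ((N:ℝ) - 1) * β ^ (r+1) * (ρ ^ r) ^ 2 := by positivity
      have h5 : ((N:ℝ) - 1) * β ^ (r+1) * (ρ ^ (r+1)) ^ 2
          ≤ ((N:ℝ) - 1) * β ^ (r+1) * (ρ ^ r) ^ 2 :=
        mul_le_mul_of_nonneg_left h2 (by positivity)
      linarith
    have hgradnn : 0 ≤ gradNorm μf u x := Real.sqrt_nonneg _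
    have hgrad_le : gradNorm μf u x ≤ ρ ^ r := by
      have h1 : gradNorm μf u x = Real.sqrt (∑ᶠ y, μf x y / (2 * vMeasure μf x) * (u y - u x) ^ 2) := rfl
      rw [h1, hgs]
      calc Real.sqrt _ ≤ Real.sqrt ((ρ ^ r) ^ 2) := Real.sqrt_le_sqrt hgs_le
        _ = ρ ^ r := Real.sqrt_sq (pow_pos hρpos r).le
    have hup : u x ^ p ≤ K := by
      rw [← hAp]
      exact Real.rpow_le_rpow_of_nonpos hApos (huA x) hp.le
    have hup0 : 0 ≤ u x ^ p := Real.rpow_nonneg (hupos x).le p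
    have hgp : gradNorm μf u x ^ (m - 1) ≤ σ ^ r := by
      rw [← hXr r]
      exact Real.rpow_le_rpow hgradnn hgrad_le hm1.le
    have hgp0 : 0 ≤ gradNorm μf u x ^ (m - 1) := Real.rpow_nonneg hgradnn _
    have hprod : u x ^ p * gradNorm μf u x ^ (m - 1) ≤ K * σ ^ r :=
      mul_le_mul hup hgp hgp0 hKpos.le
    have hlapM : lapM μf m u x
        = (vMeasure μf x)⁻¹ * (β ^ r * σ ^ r + ((N:ℝ) - 1) * (-(β ^ (r+1) * σ ^ (r+1)))) := by
      simp only [lapM]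
      rw [hlap]
    have hkey : β ^ r * σ ^ r + ((N:ℝ) - 1) * (-(β ^ (r+1) * σ ^ (r+1)))
        + K * σ ^ r * (β ^ r + ((N:ℝ) - 1) * β ^ (r+1)) ≤ 0 := by
      have h1 : ((N:ℝ) - 1) * β = t := by
        rw [hβdef]; field_simp
      have h2 : t * σ = Real.exp (lam/2) := by
        rw [htdef, hσdef, ← Real.exp_add]; congr 1; ring
      have heq2 : β ^ r * σ ^ r + ((N:ℝ) - 1) * (-(β ^ (r+1) * σ ^ (r+1)))
            + K * σ ^ r * (β ^ r + ((N:ℝ) - 1) * β ^ (r+1))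
          = σ ^ r * β ^ r * (1 - (((N:ℝ) - 1) * β) * σ + K * D) := by
        rw [hDdef, pow_succ, pow_succ]; ring
      rw [heq2, h1, h2]
      have hbr : 1 - Real.exp (lam/2) + K * D ≤ 0 := by
        rw [hEdef] at hKE; linarith
      have hσβ : 0 ≤ σ ^ r * β ^ r := by positivity
      nlinarith
    have hfin : (vMeasure μf x)⁻¹ * (β ^ r * σ ^ r + ((N:ℝ) - 1) * (-(β ^ (r+1) * σ ^ (r+1))))
        + K * σ ^ r ≤ 0 := by
      have heq3 : (vMeasure μf x)⁻¹ * (β ^ r * σ ^ r + ((N:ℝ) - 1) * (-(β ^ (r+1) * σ ^ (r+1))))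
          + K * σ ^ r
          = (vMeasure μf x)⁻¹ * (β ^ r * σ ^ r + ((N:ℝ) - 1) * (-(β ^ (r+1) * σ ^ (r+1)))
            + K * σ ^ r * vMeasure μf x) := by
        field_simp
      rw [heq3]
      apply mul_nonpos_iff.mpr
      left
      refine ⟨by positivity, ?_⟩
      calc β ^ r * σ ^ r + ((N:ℝ) - 1) * (-(β ^ (r+1) * σ ^ (r+1))) + K * σ ^ r * vMeasure μf x
          = β ^ r * σ ^ r + ((N:ℝ) - 1) * (-(β ^ (r+1) * σ ^ (r+1)))
            + K * σ ^ r * (β ^ r + ((N:ℝ) - 1) * β ^ (r+1)) := by rw [hvM]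
        _ ≤ 0 := hkey
    linarith [hlapM ▸ (add_le_add (le_refl (lapM μf m u x)) hprod)]
  -- the differential inequality at the root
  have hNne : ((N:ℝ)) ≠ 0 := by positivity
  have hμval0 : ∀ y, G.Adj o y → μf o y = 1 := by
    intro y hadj
    simp only [hμdef, if_pos hadj]
    rw [hdisto]
    simp
  have hroot : lapM μf m u o + u o ^ p * gradNorm μf u o ^ (m - 1) ≤ 0 := by
    have hdiff0 : ∀ y, G.Adj o y → u y - u o = -1 := by
      intro y hadj
      simp only [hudef]
      rw [hdist1 y hadj, hdisto]
      have h00 := hdiff 0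
      norm_num at h00 ⊢
      linarith
    have hvM : vMeasure μf o = (N:ℝ) * 1 := by
      apply St14.sum_at_root hreg hN (fun y => μf o y) 1
      · intro y h
        exact hμzero o y h
      · intro y hadj
        exact hμval0 y hadj
    have hlap : (∑ᶠ y, μf o y * |u y - u o| ^ (m - 2) * (u y - u o)) = (N:ℝ) * (-1) := by
      apply St14.sum_at_root hreg hN _ (-1)
      · intro y h
        simp [hμzero o y h]
      · intro y hadj
        rw [hμval0 y hadj, hdiff0 y hadj]
        simp [Real.one_rpow]
    have hgs : (∑ᶠ y, μf o y / (2 * vMeasure μf o) * (u y - u o) ^ 2)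
        = (N:ℝ) * (1 / (2 * vMeasure μf o)) := by
      apply St14.sum_at_root hreg hN _ (1 / (2 * vMeasure μf o))
      · intro y h
        simp [hμzero o y h]
      · intro y hadj
        rw [hμval0 y hadj, hdiff0 y hadj]
        norm_num
    have hgs2 : (∑ᶠ y, μf o y / (2 * vMeasure μf o) * (u y - u o) ^ 2) = 1 / 2 := by
      rw [hgs, hvM]
      field_simp
    have hgradnn : 0 ≤ gradNorm μf u o := Real.sqrt_nonneg _
    have hgrad_le : gradNorm μf u o ≤ 1 := by
      have h1 : gradNorm μf u o
          = Real.sqrt (∑ᶠ y, μf o y / (2 * vMeasure μf o) * (u y - u o) ^ 2) := rfl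
      rw [h1, hgs2]
      calc Real.sqrt (1/2) ≤ Real.sqrt 1 := Real.sqrt_le_sqrt (by norm_num)
        _ = 1 := Real.sqrt_one
    have hlapMo : lapM μf m u o = -1 := by
      simp only [lapM]
      rw [hlap, hvM]
      field_simp
    have hup : u o ^ p ≤ 1 := by
      have h1 : u o ^ p ≤ K := by
        rw [← hAp]
        exact Real.rpow_le_rpow_of_nonpos hApos (huA o) hp.le
      linarith
    have hup0 : 0 ≤ u o ^ p := Real.rpow_nonneg (hupos o).le p
    have hgp : gradNorm μf u o ^ (m - 1) ≤ 1 :=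
      Real.rpow_le_one hgradnn hgrad_le hm1.le
    have hgp0 : 0 ≤ gradNorm μf u o ^ (m - 1) := Real.rpow_nonneg hgradnn _
    have hprod : u o ^ p * gradNorm μf u o ^ (m - 1) ≤ 1 := by
      calc u o ^ p * gradNorm μf u o ^ (m - 1) ≤ 1 * 1 :=
        mul_le_mul hup hgp hgp0 zero_le_one
        _ = 1 := by norm_num
    rw [hlapMo]
    linarith
  -- spheres
  set sph : ℕ → Finset V := fun r => (St14.sphere_finite (o := o) htree hreg hN r).toFinset
    with hsphdef
  have hsphmem : ∀ r x, x ∈ sph r ↔ G.dist o x = r := by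
    intro r x
    simp [hsphdef, Set.Finite.mem_toFinset]
  have hsphcard : ∀ r, 1 ≤ r → (sph r).card = N * (N-1)^(r-1) := by
    intro r hr
    rw [hsphdef, ← Set.ncard_eq_toFinset_card _ (St14.sphere_finite (o := o) htree hreg hN r)]
    exact St14.sphere_ncard htree hreg hN r hr
  have hβt : ((N:ℝ) - 1) * β = t := by
    rw [hβdef]; field_simp
  -- inner sum of Wvol
  have hinner : ∀ n : ℕ, ∀ x : V,
      (∑ᶠ y, if G.dist o x ≤ n ∧ G.dist o x < G.dist o y then μf x y else 0)
      = if G.dist o x ≤ n then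
          (if G.dist o x = 0 then (N:ℝ) else ((N:ℝ)-1) * β ^ (G.dist o x)) else 0 := by
    intro n x
    by_cases hxn : G.dist o x ≤ n
    · by_cases h0 : G.dist o x = 0
      · have hxo : o = x := htree.isConnected.dist_eq_zero_iff.mp h0
        subst hxo
        rw [if_pos hxn, if_pos h0]
        have hsum := St14.sum_at_root hreg hN
          (fun y => if G.dist o o ≤ n ∧ G.dist o o < G.dist o y then μf o y else 0) 1
          (by intro y h; simp [hμzero o y h])
          (by
            intro y hadj
            show (if G.dist o o ≤ n ∧ G.dist o o < G.dist o y then μf o y else 0) = 1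
            rw [if_pos ⟨hxn, by rw [hdisto, hdist1 y hadj]; omega⟩]
            exact hμval0 y hadj)
        simpa using hsum
      · rw [if_pos hxn, if_neg h0]
        have hsum := St14.sum_at_vertex (o := o) (x := x) htree hreg hN h0
          (fun y => if G.dist o x ≤ n ∧ G.dist o x < G.dist o y then μf x y else 0)
          0 (β ^ (G.dist o x))
          (by intro y h; simp [hμzero x y h])
          (by
            intro y hadj hdy
            show (if G.dist o x ≤ n ∧ G.dist o x < G.dist o y then μf x y else 0) = 0
            rw [if_neg]
            rintro ⟨-, hlt⟩
            omega)
          (by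
            intro y hadj hdy
            show (if G.dist o x ≤ n ∧ G.dist o x < G.dist o y then μf x y else 0)
              = β ^ G.dist o x
            rw [if_pos ⟨hxn, by omega⟩]
            simp only [hμdef, if_pos hadj]
            rw [min_eq_left (by omega)])
        rw [hsum]
        ring
    · rw [if_neg hxn]
      apply finsum_eq_zero_of_forall_eq_zero
      intro y
      exact if_neg (fun hc => hxn hc.1)
  -- Wvol as a geometric sum
  have hWeq : ∀ n : ℕ, Wvol G μf o n = ∑ r ∈ Finset.range (n+1), ((N:ℝ) * t ^ r) := by
    intro n
    have hW1 : Wvol G μf o n = ∑ᶠ x, (if G.dist o x ≤ n then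
        (if G.dist o x = 0 then (N:ℝ) else ((N:ℝ)-1) * β ^ (G.dist o x)) else 0) := by
      unfold Wvol
      apply finsum_congr
      intro x
      convert hinner n x using 2
    set B : Finset V := (Finset.range (n+1)).biUnion sph with hBdef
    have hsupp : (Function.support fun x => (if G.dist o x ≤ n then
        (if G.dist o x = 0 then (N:ℝ) else ((N:ℝ)-1) * β ^ (G.dist o x)) else 0)) ⊆ ↑B := by
      intro x hx
      simp only [Function.mem_support] at hx
      have hxn : G.dist o x ≤ n := by
        by_contra hc
        exact hx (if_neg hc)
      simp only [hBdef, Finset.coe_biUnion, Finset.mem_coe, Finset.mem_range, Set.mem_iUnion]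
      exact ⟨G.dist o x, by omega, (hsphmem _ x).mpr rfl⟩
    rw [hW1, finsum_eq_sum_of_support_subset _ hsupp, hBdef]
    rw [Finset.sum_biUnion (by
      intro a ha b hb hab
      apply Finset.disjoint_left.mpr
      intro z hz1 hz2
      rw [hsphmem a z] at hz1
      rw [hsphmem b z] at hz2
      exact hab (by omega))]
    apply Finset.sum_congr rfl
    intro r hr
    rw [Finset.mem_range] at hr
    rcases Nat.eq_zero_or_pos r with rfl | hrpos
    · have hsph0 : sph 0 = {o} := by
        ext z
        rw [hsphmem 0 z, Finset.mem_singleton]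
        constructor
        · intro h
          exact (htree.isConnected.dist_eq_zero_iff.mp h).symm
        · rintro rfl
          exact hdisto
      rw [hsph0, Finset.sum_singleton, hdisto, if_pos (by omega), if_pos rfl, pow_zero, mul_one]
    · obtain ⟨s, rfl⟩ : ∃ s, r = s + 1 := ⟨r - 1, by omega⟩
      have hval : ∀ x ∈ sph (s+1), (if G.dist o x ≤ n then
          (if G.dist o x = 0 then (N:ℝ) else ((N:ℝ)-1) * β ^ (G.dist o x)) else 0)
          = ((N:ℝ)-1) * β ^ (s+1) := by
        intro x hx
        rw [hsphmem (s+1) x] at hx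
        rw [hx, if_pos (by omega), if_neg (by omega)]
      rw [Finset.sum_congr rfl hval, Finset.sum_const, hsphcard (s+1) (by omega),
        nsmul_eq_mul]
      have hcast : ((N * (N-1)^(s+1-1) : ℕ) : ℝ) = (N:ℝ) * ((N:ℝ)-1)^s := by
        push_cast [Nat.cast_sub (show 1 ≤ N by omega)]
        norm_num
      rw [hcast, ← hβt, mul_pow]
      ring
  refine ⟨μf, hμsymm, hμiff, hμzero, u, hupos, ?_, ?_, ?_, ?_⟩
  · -- nonconstant
    obtain ⟨y, hy⟩ := Set.nonempty_of_ncard_ne_zero (s := G.neighborSet o)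
      (by rw [hreg o]; omega)
    rw [SimpleGraph.mem_neighborSet] at hy
    refine ⟨o, y, ?_⟩
    simp only [hudef]
    rw [hdisto, hdist1 y hy]
    intro hcontra
    have h2 : ρ ^ (0:ℕ) / (1 - ρ) = ρ ^ (1:ℕ) / (1-ρ) := by linarith
    rw [pow_zero, pow_one, div_eq_div_iff h1ρ.ne' h1ρ.ne'] at h2
    nlinarith
  · intro x hq0
    rw [hq] at hq0
    linarith
  · intro x
    rw [hq]
    by_cases h0 : G.dist o x = 0
    · have hxo : o = x := htree.isConnected.dist_eq_zero_iff.mp h0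
      rw [← hxo]
      exact hroot
    · exact hmain x h0
  · have htm : (0:ℝ) < t - 1 := by linarith
    refine ⟨1, (N:ℝ) * t / (t - 1), one_pos, by positivity, fun n hn => ⟨?_, ?_⟩⟩
    · rw [hWeq n, one_mul, htdef, mul_comm, Real.exp_nat_mul, ← htdef]
      have h2 : (N:ℝ) * t ^ n ≤ ∑ r ∈ Finset.range (n+1), ((N:ℝ) * t ^ r) :=
        Finset.single_le_sum (f := fun r => (N:ℝ) * t ^ r)
          (fun i _ => by positivity) (Finset.self_mem_range_succ n)
      nlinarith [pow_pos (show (0:ℝ) < t by linarith) n]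
    · rw [hWeq n, htdef, mul_comm lam (n:ℝ), Real.exp_nat_mul, ← htdef]
      rw [← Finset.mul_sum, geom_sum_eq (ne_of_gt ht1)]
      have h3 : (t ^ (n+1) - 1) / (t - 1) ≤ (t * t ^ n) / (t - 1) := by
        apply (div_le_div_iff_of_pos_right htm).mpr
        rw [pow_succ]
        have := mul_comm (t ^ n) t
        linarith
      have h4 : (N:ℝ) * ((t ^ (n+1) - 1) / (t - 1)) ≤ (N:ℝ) * ((t * t ^ n) / (t - 1)) :=
        mul_le_mul_of_nonneg_left h3 (by positivity)
      have h5 : (N:ℝ) * ((t * t ^ n) / (t - 1)) = (N:ℝ) * t / (t - 1) * t ^ n := by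
        ring
      linarith
end

section
/- Let (V,E,μ) be an infinite, connected, locally finite weighted graph, let m ≥ 2, and let p,q∈ℝ satisfy p+q = m−1 and q ≠ 0. Let p₁ > 1 and set C_{p₁} = max{p₁−1, 1−1/p₁}. Suppose u:V→(0,∞) satisfies Δ_m u(x) + u(x)^p·|∇u(x)|^q ≤ 0 for all x∈V and satisfies the Harnack inequality 1/p₁ ≤ u(y)/u(x) ≤ p₁ for all adjacent x∼y. Then for every x∈V with |∇u(x)|>0 one has u(x)^{−q}·|∇u(x)|^{q} ≤ C_{p₁}^{m−2}. In particular, if q > 0 then |∇u(x)| ≤ C_{p₁}^{(m−2)/q}·u(x) for all x∈V, while if q < 0 then u(x) ≤ C_{p₁}^{(2−m)/q}·|∇u(x)| for all x∈V. -/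
variable {V : Type*}

theorem statement16
    (G : SimpleGraph V) (μ : V → V → ℝ)
    (hsymm : ∀ x y, μ x y = μ y x)
    (hnonneg : ∀ x y, 0 ≤ μ x y)
    (hadj : ∀ x y, 0 < μ x y ↔ G.Adj x y)
    (hinf : Infinite V) (hconn : G.Connected)
    (hlf : ∀ x, (G.neighborSet x).Finite)
    (m p q : ℝ) (hm : 2 ≤ m)
    (hpq : p + q = m - 1) (hq : q ≠ 0)
    (p₁ : ℝ) (hp₁ : 1 < p₁)
    (u : V → ℝ) (hu : ∀ x, 0 < u x)
    (hgrad : ∀ x, q < 0 → 0 < gradNorm μ u x)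
    (hsol : ∀ x, lapM μ m u x + u x ^ p * gradNorm μ u x ^ q ≤ 0)
    (hHar : ∀ x y, G.Adj x y → 1 / p₁ ≤ u y / u x ∧ u y / u x ≤ p₁) :
    (∀ x, 0 < gradNorm μ u x →
      u x ^ (-q) * gradNorm μ u x ^ q ≤ (max (p₁ - 1) (1 - 1 / p₁)) ^ (m - 2)) ∧
    (0 < q → ∀ x,
      gradNorm μ u x ≤ (max (p₁ - 1) (1 - 1 / p₁)) ^ ((m - 2) / q) * u x) ∧
    (q < 0 → ∀ x,
      u x ≤ (max (p₁ - 1) (1 - 1 / p₁)) ^ ((2 - m) / q) * gradNorm μ u x) := by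
  set C : ℝ := max (p₁ - 1) (1 - 1 / p₁) with hCdef
  have hp₁0 : 0 < p₁ := by linarith
  have hC : 0 < C := lt_max_of_lt_left (by linarith)
  -- zero weight off neighbors
  have hzero : ∀ x y, ¬ G.Adj x y → μ x y = 0 :=
    fun x y h => le_antisymm (not_lt.mp (fun hh => h ((hadj x y).mp hh))) (hnonneg x y)
  -- Harnack consequences
  have hHar1 : ∀ x y, G.Adj x y → |u y - u x| ≤ C * u x := by
    intro x y h
    obtain ⟨h1, h2⟩ := hHar x y h
    have hux := hu x
    have h1' : u x / p₁ ≤ u y := by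
      rw [div_le_div_iff₀ hp₁0 hux] at h1
      rw [div_le_iff₀ hp₁0]
      linarith
    have h2' : u y ≤ p₁ * u x := by
      rw [div_le_iff₀ hux] at h2; linarith
    rw [abs_sub_le_iff]
    constructor
    · calc u y - u x ≤ (p₁ - 1) * u x := by linarith
        _ ≤ C * u x := by
          apply mul_le_mul_of_nonneg_right (le_max_left _ _) hux.le
    · have : u x - u y ≤ (1 - 1 / p₁) * u x := by
        have : u x / p₁ = (1 / p₁) * u x := by ring
        rw [this] at h1'
        linarith
      calc u x - u y ≤ (1 - 1 / p₁) * u x := this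
        _ ≤ C * u x := mul_le_mul_of_nonneg_right (le_max_right _ _) hux.le
  -- key pointwise estimate: u^p g^q ≤ C^(m-2) u^(m-1)
  have key : ∀ x, u x ^ p * gradNorm μ u x ^ q ≤ C ^ (m - 2) * u x ^ (m - 1) := by
    intro x
    set s : Finset V := (hlf x).toFinset with hs
    have hmem : ∀ y, y ∈ s ↔ G.Adj x y := by
      intro y; simp [hs, SimpleGraph.mem_neighborSet]
    have hsupp : ∀ (f : V → ℝ), (∀ y, ¬ G.Adj x y → f y = 0) →
        (∑ᶠ y, f y) = ∑ y ∈ s, f y := by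
      intro f hf
      apply finsum_eq_sum_of_support_subset
      intro y hy
      simp only [Function.mem_support] at hy
      rw [Finset.mem_coe, hmem]
      by_contra h
      exact hy (hf y h)
    -- vMeasure as a finite sum
    have hvm : vMeasure μ x = ∑ y ∈ s, μ x y :=
      hsupp _ (fun y h => hzero x y h)
    -- positivity of vMeasure : x has a neighbor
    obtain ⟨z, hz⟩ : ∃ z, G.Adj x z := by
      obtain ⟨y, hy⟩ := exists_ne x
      obtain ⟨w⟩ := hconn x y
      cases w with
      | nil => exact absurd rfl hy.symm
      | cons h _ => exact ⟨_, h⟩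
    have hvmpos : 0 < vMeasure μ x := by
      rw [hvm]
      apply Finset.sum_pos' (fun y _ => hnonneg x y)
      exact ⟨z, (hmem z).mpr hz, (hadj x z).mpr hz⟩
    -- the Laplacian sum as a finite sum
    have hlap : lapM μ m u x = (vMeasure μ x)⁻¹ *
        ∑ y ∈ s, μ x y * |u y - u x| ^ (m - 2) * (u y - u x) := by
      rw [lapM, hsupp _ (fun y h => by rw [hzero x y h]; ring)]
    -- termwise bound
    have hterm : ∀ y ∈ s, -(μ x y * |u y - u x| ^ (m - 2) * (u y - u x)) ≤
        μ x y * ((C * u x) ^ (m - 2) * u x) := by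
      intro y hy
      have hadjy := (hmem y).mp hy
      have habs := hHar1 x y hadjy
      rcases le_or_gt 0 (u y - u x) with hd | hd
      · have h1 : 0 ≤ μ x y * |u y - u x| ^ (m - 2) * (u y - u x) := by
          apply mul_nonneg (mul_nonneg (hnonneg x y) (Real.rpow_nonneg (abs_nonneg _) _)) hd
        have h2 : 0 ≤ μ x y * ((C * u x) ^ (m - 2) * u x) := by
          apply mul_nonneg (hnonneg x y)
          exact mul_nonneg (Real.rpow_nonneg (mul_nonneg hC.le (hu x).le) _) (hu x).le
        linarith
      · have e : -(μ x y * |u y - u x| ^ (m - 2) * (u y - u x)) =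
            μ x y * (|u y - u x| ^ (m - 2) * (u x - u y)) := by ring
        rw [e]
        apply mul_le_mul_of_nonneg_left _ (hnonneg x y)
        apply mul_le_mul
        · exact Real.rpow_le_rpow (abs_nonneg _) habs (by linarith)
        · have := hu y; linarith
        · linarith
        · exact Real.rpow_nonneg (mul_nonneg hC.le (hu x).le) _
    -- -lapM ≤ (C u)^(m-2) * u
    have hlapbd : -(lapM μ m u x) ≤ (C * u x) ^ (m - 2) * u x := by
      rw [hlap, ← mul_neg, ← Finset.sum_neg_distrib]
      have hsum : ∑ y ∈ s, -(μ x y * |u y - u x| ^ (m - 2) * (u y - u x)) ≤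
          ∑ y ∈ s, μ x y * ((C * u x) ^ (m - 2) * u x) :=
        Finset.sum_le_sum hterm
      rw [← Finset.sum_mul, ← hvm] at hsum
      calc (vMeasure μ x)⁻¹ * ∑ y ∈ s, -(μ x y * |u y - u x| ^ (m - 2) * (u y - u x))
          ≤ (vMeasure μ x)⁻¹ * (vMeasure μ x * ((C * u x) ^ (m - 2) * u x)) :=
            mul_le_mul_of_nonneg_left hsum (inv_nonneg.mpr hvmpos.le)
        _ = (C * u x) ^ (m - 2) * u x := by field_simp
    have hrw : (C * u x) ^ (m - 2) * u x = C ^ (m - 2) * u x ^ (m - 1) := by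
      rw [Real.mul_rpow hC.le (hu x).le, mul_assoc, ← Real.rpow_add_one (hu x).ne',
        show m - 2 + 1 = m - 1 from by ring]
    have := hsol x
    rw [hrw] at hlapbd
    linarith
  -- main inequality
  have main : ∀ x, u x ^ (-q) * gradNorm μ u x ^ q ≤ C ^ (m - 2) := by
    intro x
    have h := key x
    have hp : p = (m - 1) + (-q) := by linarith
    rw [hp, Real.rpow_add (hu x)] at h
    have hpos : 0 < u x ^ (m - 1) := Real.rpow_pos_of_pos (hu x) _
    rw [mul_assoc, mul_comm (C ^ (m - 2)) (u x ^ (m - 1))] at h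
    exact le_of_mul_le_mul_left h hpos
  refine ⟨fun x _ => main x, ?_, ?_⟩
  · -- q > 0
    intro hq' x
    have hg0 : 0 ≤ gradNorm μ u x := Real.sqrt_nonneg _
    rcases hg0.eq_or_lt with hg | hg
    · rw [← hg]
      exact mul_nonneg (Real.rpow_nonneg hC.le _) (hu x).le
    · have h := main x
      have hA : (0:ℝ) ≤ u x ^ (-q) * gradNorm μ u x ^ q :=
        mul_nonneg (Real.rpow_nonneg (hu x).le _) (Real.rpow_nonneg hg.le _)
      have h2 := Real.rpow_le_rpow hA h (one_div_pos.mpr hq').le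
      rw [Real.mul_rpow (Real.rpow_nonneg (hu x).le _) (Real.rpow_nonneg hg.le _),
        ← Real.rpow_mul (hu x).le, ← Real.rpow_mul hg.le, ← Real.rpow_mul hC.le] at h2
      have e1 : -q * (1 / q) = -1 := by field_simp
      have e2 : q * (1 / q) = 1 := by field_simp
      have e3 : (m - 2) * (1 / q) = (m - 2) / q := by ring
      rw [e1, e2, e3, Real.rpow_neg_one, Real.rpow_one] at h2
      rw [inv_mul_eq_div, div_le_iff₀ (hu x)] at h2
      linarith
  · -- q < 0
    intro hq' x
    have hg := hgrad x hq'
    have h := main x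
    have hA : (0:ℝ) < u x ^ (-q) * gradNorm μ u x ^ q :=
      mul_pos (Real.rpow_pos_of_pos (hu x) _) (Real.rpow_pos_of_pos hg _)
    have h2 := Real.rpow_le_rpow_of_nonpos hA h (one_div_neg.mpr hq').le
    rw [Real.mul_rpow (Real.rpow_nonneg (hu x).le _) (Real.rpow_nonneg hg.le _),
      ← Real.rpow_mul (hu x).le, ← Real.rpow_mul hg.le, ← Real.rpow_mul hC.le] at h2
    have e1 : -q * (1 / q) = -1 := by field_simp
    have e2 : q * (1 / q) = 1 := by field_simp
    have e3 : (m - 2) * (1 / q) = -((2 - m) / q) := by ring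
    rw [e1, e2, e3, Real.rpow_neg_one, Real.rpow_one, Real.rpow_neg hC.le] at h2
    have hcpos : 0 < C ^ ((2 - m) / q) := Real.rpow_pos_of_pos hC _
    rw [inv_mul_eq_div, le_div_iff₀ (hu x)] at h2
    calc u x = C ^ ((2 - m) / q) * ((C ^ ((2 - m) / q))⁻¹ * u x) := by
          field_simp
      _ ≤ C ^ ((2 - m) / q) * gradNorm μ u x :=
          mul_le_mul_of_nonneg_left h2 hcpos.le
end

section
/- Let (V,E,μ) be an infinite, connected, locally finite weighted graph satisfying condition (p₀) with constant p₀>1, and let m>1. Let u:V→(0,∞) and let x∈V be a vertex with Δ_m u(x) ≤ 0, and set u_min = min_{y∼x} u(y). Then u_min ≤ u(x); moreover, for every neighbor y∼x with u(y) ≥ u(x) one has u(y) − u(x) ≤ p₀^{1/(m−1)}·(u(x) − u_min), and consequently 2·|∇u(x)|² ≤ (p₀^{2/(m−1)} + 1)·(u(x) − u_min)². -/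
variable {V : Type*}

theorem statement17
    (G : SimpleGraph V) (μ : V → V → ℝ)
    (hsymm : ∀ x y, μ x y = μ y x)
    (hnonneg : ∀ x y, 0 ≤ μ x y)
    (hadj : ∀ x y, 0 < μ x y ↔ G.Adj x y)
    (hinf : Infinite V) (hconn : G.Connected)
    (hlf : ∀ x, (G.neighborSet x).Finite)
    (p₀ : ℝ) (hp₀ : 1 < p₀)
    (hcond : ∀ x y, G.Adj x y → 1 / p₀ ≤ μ x y / vMeasure μ x)
    (m : ℝ) (hm : 1 < m)
    (u : V → ℝ) (hu : ∀ x, 0 < u x)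
    (x : V) (hx : lapM μ m u x ≤ 0) :
    sInf (u '' G.neighborSet x) ≤ u x ∧
    (∀ y, G.Adj x y → u x ≤ u y →
      u y - u x ≤ p₀ ^ ((1:ℝ) / (m - 1)) * (u x - sInf (u '' G.neighborSet x))) ∧
    2 * gradNorm μ u x ^ 2 ≤
      (p₀ ^ ((2:ℝ) / (m - 1)) + 1) * (u x - sInf (u '' G.neighborSet x)) ^ 2 := by
  classical
  have hp₀pos : (0:ℝ) < p₀ := lt_trans one_pos hp₀
  have hm1 : (0:ℝ) < m - 1 := by linarith
  have hm1' : m - 1 ≠ 0 := ne_of_gt hm1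
  -- a neighbor exists
  have hex : ∃ y, G.Adj x y := by
    obtain ⟨z, hz⟩ := exists_ne x
    obtain ⟨p⟩ := hconn.preconnected x z
    cases p with
    | nil => exact absurd rfl hz
    | cons h q => exact ⟨_, h⟩
  set N : Finset V := (hlf x).toFinset with hNdef
  have hmemN : ∀ y, y ∈ N ↔ G.Adj x y := fun y => by
    simp [hNdef, SimpleGraph.mem_neighborSet]
  obtain ⟨y₀, hy₀⟩ := hex
  have hy₀N : y₀ ∈ N := (hmemN y₀).2 hy₀
  have hμpos : ∀ y ∈ N, 0 < μ x y := fun y hy => (hadj x y).2 ((hmemN y).1 hy)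
  have hsupp1 : ∀ y, μ x y ≠ 0 → y ∈ N := fun y h =>
    (hmemN y).2 ((hadj x y).1 (lt_of_le_of_ne (hnonneg x y) (Ne.symm h)))
  have hV : vMeasure μ x = ∑ y ∈ N, μ x y := by
    apply finsum_eq_finset_sum_of_support_subset
    intro y hy
    rw [Function.mem_support] at hy
    exact hsupp1 y hy
  have hVpos : 0 < vMeasure μ x := by
    rw [hV]
    exact Finset.sum_pos' (fun y _ => hnonneg x y) ⟨y₀, hy₀N, hμpos y₀ hy₀N⟩
  have hfin2 : ∑ᶠ y, μ x y * |u y - u x| ^ (m - 2) * (u y - u x)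
      = ∑ y ∈ N, μ x y * |u y - u x| ^ (m - 2) * (u y - u x) := by
    apply finsum_eq_finset_sum_of_support_subset
    intro y hy
    rw [Function.mem_support] at hy
    apply hsupp1
    intro h0
    exact hy (by simp [h0])
  have hfin3 : ∑ᶠ y, μ x y / (2 * vMeasure μ x) * (u y - u x) ^ 2
      = ∑ y ∈ N, μ x y / (2 * vMeasure μ x) * (u y - u x) ^ 2 := by
    apply finsum_eq_finset_sum_of_support_subset
    intro y hy
    rw [Function.mem_support] at hy
    apply hsupp1
    intro h0
    exact hy (by simp [h0])
  set Mi := sInf (u '' G.neighborSet x) with hMidef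
  have hfin : (u '' G.neighborSet x).Finite := (hlf x).image u
  have hMle : ∀ y, G.Adj x y → Mi ≤ u y :=
    fun y hy => csInf_le hfin.bddBelow ⟨y, hy, rfl⟩
  -- Part 1
  have part1 : Mi ≤ u x := by
    by_contra hcon
    push_neg at hcon
    have hpos : 0 < ∑ y ∈ N, μ x y * |u y - u x| ^ (m - 2) * (u y - u x) := by
      apply Finset.sum_pos _ ⟨y₀, hy₀N⟩
      intro y hy
      have ht : 0 < u y - u x := by
        have := hMle y ((hmemN y).1 hy); linarith
      have habs : 0 < |u y - u x| := abs_pos.2 (ne_of_gt ht)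
      exact mul_pos (mul_pos (hμpos y hy) (Real.rpow_pos_of_pos habs _)) ht
    have hlp : 0 < lapM μ m u x := by
      rw [lapM, hfin2]
      exact mul_pos (inv_pos.2 hVpos) hpos
    linarith
  -- basic rpow identity
  have hterm : ∀ t : ℝ, 0 ≤ t → |t| ^ (m - 2) * t = t ^ (m - 1) := by
    intro t ht
    rcases eq_or_lt_of_le ht with h | h
    · rw [← h]
      simp [Real.zero_rpow hm1']
    · rw [abs_of_pos h]
      nth_rewrite 2 [← Real.rpow_one t]
      rw [← Real.rpow_add h]
      congr 1
      ring
  -- Part 2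
  have key : ∀ y, G.Adj x y → u x ≤ u y →
      u y - u x ≤ p₀ ^ ((1:ℝ) / (m - 1)) * (u x - Mi) := by
    intro y hyadj hxy
    have hyN : y ∈ N := (hmemN y).2 hyadj
    have ha : 0 ≤ u y - u x := by linarith
    have hb : 0 ≤ u x - Mi := by linarith
    have hbr : 0 ≤ (u x - Mi) ^ (m - 1) := Real.rpow_nonneg hb _
    have hS : ∑ z ∈ N, μ x z * |u z - u x| ^ (m - 2) * (u z - u x) ≤ 0 := by
      by_contra hcon
      push_neg at hcon
      have := mul_pos (inv_pos.2 hVpos) hcon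
      rw [lapM, hfin2] at hx
      linarith
    have hbound : ∀ z ∈ N, -(μ x z * |u z - u x| ^ (m - 2) * (u z - u x))
        ≤ μ x z * (u x - Mi) ^ (m - 1) := by
      intro z hzN
      rcases le_or_gt (u x) (u z) with h | h
      · have h1 : 0 ≤ μ x z * |u z - u x| ^ (m - 2) * (u z - u x) :=
          mul_nonneg (mul_nonneg (hnonneg x z)
            (Real.rpow_nonneg (abs_nonneg _) _)) (by linarith)
        have h2 : 0 ≤ μ x z * (u x - Mi) ^ (m - 1) := mul_nonneg (hnonneg x z) hbr
        linarith
      · have hle : u x - u z ≤ u x - Mi := by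
          have := hMle z ((hmemN z).1 hzN); linarith
        have hrle : (u x - u z) ^ (m - 1) ≤ (u x - Mi) ^ (m - 1) :=
          Real.rpow_le_rpow (by linarith) hle (le_of_lt hm1)
        have heq : -(μ x z * |u z - u x| ^ (m - 2) * (u z - u x))
            = μ x z * (u x - u z) ^ (m - 1) := by
          rw [← hterm (u x - u z) (by linarith), abs_sub_comm]
          ring
        rw [heq]
        exact mul_le_mul_of_nonneg_left hrle (hnonneg x z)
    have hkey1 : μ x y * (u y - u x) ^ (m - 1) ≤ vMeasure μ x * (u x - Mi) ^ (m - 1) := by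
      have hsplit : μ x y * |u y - u x| ^ (m - 2) * (u y - u x)
          + ∑ z ∈ N.erase y, μ x z * |u z - u x| ^ (m - 2) * (u z - u x)
          = ∑ z ∈ N, μ x z * |u z - u x| ^ (m - 2) * (u z - u x) :=
        Finset.add_sum_erase N
          (fun z => μ x z * |u z - u x| ^ (m - 2) * (u z - u x)) hyN
      have h1 : μ x y * |u y - u x| ^ (m - 2) * (u y - u x)
          ≤ ∑ z ∈ N.erase y, -(μ x z * |u z - u x| ^ (m - 2) * (u z - u x)) := by
        rw [Finset.sum_neg_distrib]
        linarith
      have h2 : ∑ z ∈ N.erase y, -(μ x z * |u z - u x| ^ (m - 2) * (u z - u x))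
          ≤ ∑ z ∈ N.erase y, μ x z * (u x - Mi) ^ (m - 1) :=
        Finset.sum_le_sum fun z hz => hbound z (Finset.mem_of_mem_erase hz)
      have h3 : ∑ z ∈ N.erase y, μ x z * (u x - Mi) ^ (m - 1)
          ≤ ∑ z ∈ N, μ x z * (u x - Mi) ^ (m - 1) :=
        Finset.sum_le_sum_of_subset_of_nonneg (Finset.erase_subset _ _)
          (fun z hz _ => mul_nonneg (hnonneg x z) hbr)
      have h4 : ∑ z ∈ N, μ x z * (u x - Mi) ^ (m - 1)
          = vMeasure μ x * (u x - Mi) ^ (m - 1) := by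
        rw [hV, Finset.sum_mul]
      have h5 : μ x y * |u y - u x| ^ (m - 2) * (u y - u x)
          = μ x y * (u y - u x) ^ (m - 1) := by
        rw [← hterm (u y - u x) ha]
        ring
      linarith
    have hμy : 0 < μ x y := hμpos y hyN
    have hVle : vMeasure μ x ≤ p₀ * μ x y := by
      have h := hcond x y hyadj
      rw [div_le_div_iff₀ hp₀pos hVpos] at h
      linarith
    have hkey2 : (u y - u x) ^ (m - 1) ≤ p₀ * (u x - Mi) ^ (m - 1) := by
      have h2 : μ x y * (u y - u x) ^ (m - 1) ≤ μ x y * (p₀ * (u x - Mi) ^ (m - 1)) := by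
        have := mul_le_mul_of_nonneg_right hVle hbr
        nlinarith
      exact le_of_mul_le_mul_left h2 hμy
    have har : 0 ≤ (u y - u x) ^ (m - 1) := Real.rpow_nonneg ha _
    calc u y - u x = ((u y - u x) ^ (m - 1)) ^ ((1:ℝ) / (m - 1)) := by
          rw [← Real.rpow_mul ha, mul_one_div, div_self hm1', Real.rpow_one]
      _ ≤ (p₀ * (u x - Mi) ^ (m - 1)) ^ ((1:ℝ) / (m - 1)) :=
          Real.rpow_le_rpow har hkey2 (by positivity)
      _ = p₀ ^ ((1:ℝ) / (m - 1)) * (u x - Mi) := by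
          rw [Real.mul_rpow hp₀pos.le hbr, ← Real.rpow_mul hb, mul_one_div,
            div_self hm1', Real.rpow_one]
  -- Part 3
  have hb : 0 ≤ u x - Mi := by linarith
  have hc1 : 1 ≤ p₀ ^ ((1:ℝ) / (m - 1)) := by
    calc (1:ℝ) = (1:ℝ) ^ ((1:ℝ) / (m - 1)) := (Real.one_rpow _).symm
      _ ≤ p₀ ^ ((1:ℝ) / (m - 1)) :=
          Real.rpow_le_rpow zero_le_one hp₀.le (by positivity)
  have hcc : p₀ ^ ((1:ℝ) / (m - 1)) * p₀ ^ ((1:ℝ) / (m - 1)) = p₀ ^ ((2:ℝ) / (m - 1)) := by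
    rw [← Real.rpow_add hp₀pos]
    congr 1
    ring
  have habs2 : ∀ y ∈ N, |u y - u x| ≤ p₀ ^ ((1:ℝ) / (m - 1)) * (u x - Mi) := by
    intro y hyN
    rcases le_or_gt (u x) (u y) with h | h
    · rw [abs_of_nonneg (by linarith)]
      exact key y ((hmemN y).1 hyN) h
    · rw [abs_of_neg (by linarith)]
      have h1 := hMle y ((hmemN y).1 hyN)
      nlinarith
  have hsq : ∀ y ∈ N, (u y - u x) ^ 2 ≤ p₀ ^ ((2:ℝ) / (m - 1)) * (u x - Mi) ^ 2 := by
    intro y hyN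
    have h := habs2 y hyN
    calc (u y - u x) ^ 2 = |u y - u x| ^ 2 := (sq_abs _).symm
      _ ≤ (p₀ ^ ((1:ℝ) / (m - 1)) * (u x - Mi)) ^ 2 :=
          pow_le_pow_left₀ (abs_nonneg _) h 2
      _ = p₀ ^ ((2:ℝ) / (m - 1)) * (u x - Mi) ^ 2 := by
          rw [mul_pow, pow_two (p₀ ^ ((1:ℝ) / (m - 1))), hcc]
  have hsnn : 0 ≤ ∑ y ∈ N, μ x y / (2 * vMeasure μ x) * (u y - u x) ^ 2 :=
    Finset.sum_nonneg fun y _ => by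
      have h1 := hnonneg x y
      positivity
  have hgrad : gradNorm μ u x ^ 2
      = ∑ y ∈ N, μ x y / (2 * vMeasure μ x) * (u y - u x) ^ 2 := by
    rw [gradNorm, hfin3, Real.sq_sqrt hsnn]
  have hsum1 : ∑ y ∈ N, μ x y / vMeasure μ x = 1 := by
    rw [← Finset.sum_div, ← hV, div_self (ne_of_gt hVpos)]
  refine ⟨part1, key, ?_⟩
  have h2s : 2 * gradNorm μ u x ^ 2
      = ∑ y ∈ N, μ x y / vMeasure μ x * (u y - u x) ^ 2 := by
    rw [hgrad, Finset.mul_sum]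
    apply Finset.sum_congr rfl
    intro y _
    field_simp
  rw [h2s]
  have hbnd : ∑ y ∈ N, μ x y / vMeasure μ x * (u y - u x) ^ 2
      ≤ p₀ ^ ((2:ℝ) / (m - 1)) * (u x - Mi) ^ 2 := by
    calc ∑ y ∈ N, μ x y / vMeasure μ x * (u y - u x) ^ 2
        ≤ ∑ y ∈ N, μ x y / vMeasure μ x * (p₀ ^ ((2:ℝ) / (m - 1)) * (u x - Mi) ^ 2) := by
          apply Finset.sum_le_sum
          intro y hyN
          have h1 := hnonneg x y
          exact mul_le_mul_of_nonneg_left (hsq y hyN) (by positivity)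
      _ = p₀ ^ ((2:ℝ) / (m - 1)) * (u x - Mi) ^ 2 := by
          rw [← Finset.sum_mul, hsum1, one_mul]
  nlinarith [sq_nonneg (u x - Mi)]
end

section
/- Let (V,E,μ) be an infinite, connected, locally finite weighted graph, let m>1 and p,q∈ℝ, and let u be a nontrivial (nonconstant) positive solution of (★) on V. Then there exists a sequence of vertices (x_n)_{n≥0} such that for every n: x_{n+1} ∼ x_n, u(x_{n+1}) = min_{y∼x_n} u(y), u(x_{n+1}) ≤ u(x_n), |∇u(x_n)| > 0, and Δ_m u(x_n) < 0; moreover Δ_m u(x_n) → 0 and u(x_n)^p·|∇u(x_n)|^q → 0 as n → ∞. -/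
variable {V : Type*}

/-- Along a walk joining vertices with different `u`-values there is an edge
whose endpoints have different `u`-values. -/
lemma exists_adj_ne_aux {V : Type*} {G : SimpleGraph V} (u : V → ℝ) :
    ∀ {a b : V}, G.Walk a b → u a ≠ u b → ∃ x y, G.Adj x y ∧ u x ≠ u y := by
  intro a b w
  induction w with
  | nil => intro h; exact absurd rfl h
  | @cons a c b h p ih =>
    intro hab
    rcases eq_or_ne (u a) (u c) with hc | hc
    · exact ih (by rw [← hc]; exact hab)
    · exact ⟨a, c, h, hc⟩

theorem statement18
    (G : SimpleGraph V) (μ : V → V → ℝ)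
    (hsymm : ∀ x y, μ x y = μ y x)
    (hnonneg : ∀ x y, 0 ≤ μ x y)
    (hadj : ∀ x y, 0 < μ x y ↔ G.Adj x y)
    (hinf : Infinite V) (hconn : G.Connected)
    (hlf : ∀ x, (G.neighborSet x).Finite)
    (m p q : ℝ) (hm : 1 < m)
    (u : V → ℝ) (hu : ∀ x, 0 < u x)
    (hgrad : ∀ x, q < 0 → 0 < gradNorm μ u x)
    (hsol : ∀ x, lapM μ m u x + u x ^ p * gradNorm μ u x ^ q ≤ 0)
    (hnc : ∃ a b, u a ≠ u b) :
    ∃ x : ℕ → V,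
      (∀ n, G.Adj (x n) (x (n + 1))) ∧
      (∀ n, u (x (n + 1)) = sInf (u '' G.neighborSet (x n))) ∧
      (∀ n, u (x (n + 1)) ≤ u (x n)) ∧
      (∀ n, 0 < gradNorm μ u (x n)) ∧
      (∀ n, lapM μ m u (x n) < 0) ∧
      Filter.Tendsto (fun n => lapM μ m u (x n)) Filter.atTop (nhds 0) ∧
      Filter.Tendsto (fun n => u (x n) ^ p * gradNorm μ u (x n) ^ q)
        Filter.atTop (nhds 0) := by
  classical
  set N : V → Finset V := fun x => (hlf x).toFinset with hNdef
  have hmemN : ∀ x y, y ∈ N x ↔ G.Adj x y := by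
    intro x y
    simp [hNdef, Set.Finite.mem_toFinset]
  have hμ0 : ∀ x y, ¬ G.Adj x y → μ x y = 0 := by
    intro x y h
    rcases (hnonneg x y).eq_or_lt with h0 | h1
    · exact h0.symm
    · exact absurd ((hadj x y).1 h1) h
  have hsum : ∀ (x : V) (f : V → ℝ), (∀ y, ¬ G.Adj x y → f y = 0) →
      ∑ᶠ y, f y = ∑ y ∈ N x, f y := by
    intro x f hf
    apply finsum_eq_finset_sum_of_support_subset
    intro y hy
    rw [Function.mem_support] at hy
    rw [Finset.mem_coe, hmemN]
    by_contra h
    exact hy (hf y h)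
  have hvM : ∀ x, vMeasure μ x = ∑ y ∈ N x, μ x y := by
    intro x
    exact hsum x _ (fun y h => hμ0 x y h)
  have hlap : ∀ x, lapM μ m u x =
      (vMeasure μ x)⁻¹ * ∑ y ∈ N x, μ x y * |u y - u x| ^ (m - 2) * (u y - u x) := by
    intro x
    unfold lapM
    rw [hsum x _ (fun y h => by rw [hμ0 x y h]; ring)]
  have hgradN : ∀ x, gradNorm μ u x =
      Real.sqrt (∑ y ∈ N x, μ x y / (2 * vMeasure μ x) * (u y - u x) ^ 2) := by
    intro x
    unfold gradNorm
    rw [hsum x _ (fun y h => by rw [hμ0 x y h]; ring)]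
  -- every vertex has a neighbor
  have hadj_ex : ∀ x : V, ∃ y, G.Adj x y := by
    intro x
    obtain ⟨z, hz⟩ := exists_ne x
    obtain ⟨w⟩ := hconn.preconnected x z
    cases w with
    | nil => exact absurd rfl hz
    | cons h _ => exact ⟨_, h⟩
  have hvpos : ∀ x, 0 < vMeasure μ x := by
    intro x
    rw [hvM]
    obtain ⟨y, hy⟩ := hadj_ex x
    exact Finset.sum_pos' (fun z _ => hnonneg x z)
      ⟨y, (hmemN x y).2 hy, (hadj x y).2 hy⟩
  -- gradient positive at a vertex with a neighbor of different value
  have hgradpos : ∀ x y, G.Adj x y → u y ≠ u x → 0 < gradNorm μ u x := by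
    intro x y hxy hne
    rw [hgradN]
    apply Real.sqrt_pos.2
    apply Finset.sum_pos'
    · intro z _
      have : 0 ≤ μ x z / (2 * vMeasure μ x) :=
        div_nonneg (hnonneg x z) (by linarith [hvpos x])
      positivity
    · refine ⟨y, (hmemN x y).2 hxy, ?_⟩
      have h1 : 0 < μ x y / (2 * vMeasure μ x) :=
        div_pos ((hadj x y).2 hxy) (by linarith [hvpos x])
      have h2 : 0 < (u y - u x) ^ 2 := by
        have : u y - u x ≠ 0 := sub_ne_zero.2 hne
        positivity
      positivity
  -- gradient positive implies Laplacian negative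
  have hlapneg : ∀ x, 0 < gradNorm μ u x → lapM μ m u x < 0 := by
    intro x hg
    have h1 : 0 < u x ^ p * gradNorm μ u x ^ q :=
      mul_pos (Real.rpow_pos_of_pos (hu x) p) (Real.rpow_pos_of_pos hg q)
    linarith [hsol x]
  -- Laplacian negative implies a strictly smaller neighbor
  have hdesc : ∀ x, lapM μ m u x < 0 → ∃ y, G.Adj x y ∧ u y < u x := by
    intro x hl
    rw [hlap x] at hl
    have hinv : 0 < (vMeasure μ x)⁻¹ := inv_pos.2 (hvpos x)
    have hsumneg : ∑ y ∈ N x, μ x y * |u y - u x| ^ (m - 2) * (u y - u x) < 0 := by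
      by_contra h
      push_neg at h
      nlinarith
    obtain ⟨y, hyN, hy⟩ : ∃ y ∈ N x,
        μ x y * |u y - u x| ^ (m - 2) * (u y - u x) < 0 := by
      by_contra h
      push_neg at h
      exact absurd (Finset.sum_nonneg h) (not_le.2 hsumneg)
    refine ⟨y, (hmemN x y).1 hyN, ?_⟩
    by_contra h
    push_neg at h
    have h0 : 0 ≤ μ x y * |u y - u x| ^ (m - 2) * (u y - u x) :=
      mul_nonneg (mul_nonneg (hnonneg x y)
        (Real.rpow_nonneg (abs_nonneg _) _)) (by linarith)
    linarith
  -- choose a minimizing neighbor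
  have hImg : ∀ x : V, ∃ y, G.Adj x y ∧ u y = sInf (u '' G.neighborSet x) := by
    intro x
    have hfin : (u '' G.neighborSet x).Finite := (hlf x).image u
    have hnemp : (u '' G.neighborSet x).Nonempty := by
      obtain ⟨y, hy⟩ := hadj_ex x
      exact ⟨u y, y, hy, rfl⟩
    obtain ⟨y, hyN, hy⟩ := hnemp.csInf_mem hfin
    exact ⟨y, hyN, hy⟩
  choose next hnextadj hnextval using hImg
  have hsInf_le : ∀ x y, G.Adj x y → sInf (u '' G.neighborSet x) ≤ u y := by
    intro x y hxy
    exact csInf_le ((hlf x).image u).bddBelow ⟨y, hxy, rfl⟩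
  have hstep : ∀ x, 0 < gradNorm μ u x → u (next x) < u x := by
    intro x hg
    obtain ⟨y, hxy, hy⟩ := hdesc x (hlapneg x hg)
    calc u (next x) = sInf (u '' G.neighborSet x) := hnextval x
      _ ≤ u y := hsInf_le x y hxy
      _ < u x := hy
  -- starting vertex
  obtain ⟨a₀, b₀, hab₀⟩ := hnc
  obtain ⟨w₀⟩ := hconn.preconnected a₀ b₀
  obtain ⟨a, b, hab, hne⟩ := exists_adj_ne_aux u w₀ hab₀
  have hg0 : 0 < gradNorm μ u a := hgradpos a b hab hne.symm
  -- the sequence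
  set x : ℕ → V := fun n => next^[n] a with hxdef
  have hxsucc : ∀ n, x (n + 1) = next (x n) := by
    intro n
    simp [hxdef, Function.iterate_succ_apply']
  have hginv : ∀ n, 0 < gradNorm μ u (x n) := by
    intro n
    induction n with
    | zero => exact hg0
    | succ k ih =>
      have hlt : u (next (x k)) < u (x k) := hstep _ ih
      rw [hxsucc k]
      exact hgradpos (next (x k)) (x k) (hnextadj (x k)).symm (ne_of_lt hlt).symm
  have hdec : ∀ n, u (x (n + 1)) < u (x n) := by
    intro n
    rw [hxsucc n]
    exact hstep _ (hginv n)
  have hlapn : ∀ n, lapM μ m u (x n) < 0 := fun n => hlapneg _ (hginv n)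
  -- convergence of u (x n)
  have hanti : Antitone fun n => u (x n) := antitone_nat_of_succ_le fun n => (hdec n).le
  have hbdd : BddBelow (Set.range fun n => u (x n)) := by
    refine ⟨0, ?_⟩
    rintro _ ⟨n, rfl⟩
    exact (hu _).le
  have hlim : Filter.Tendsto (fun n => u (x n)) Filter.atTop (nhds (⨅ n, u (x n))) :=
    tendsto_atTop_ciInf hanti hbdd
  have hlim' : Filter.Tendsto (fun n => u (x (n + 1))) Filter.atTop (nhds (⨅ n, u (x n))) := by
    have := hlim.comp (Filter.tendsto_add_atTop_nat 1)
    exact this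
  have hdiff : Filter.Tendsto (fun n => u (x n) - u (x (n + 1))) Filter.atTop (nhds 0) := by
    have := hlim.sub hlim'
    simpa using this
  have hd : Filter.Tendsto (fun n => (u (x n) - u (x (n + 1))) ^ (m - 1))
      Filter.atTop (nhds 0) := by
    have hcont : ContinuousAt (fun t : ℝ => t ^ (m - 1)) 0 :=
      Real.continuousAt_rpow_const 0 (m - 1) (Or.inr (by linarith))
    have h2 := hcont.tendsto.comp hdiff
    simpa [Function.comp_def, Real.zero_rpow (show m - 1 ≠ 0 by linarith)] using h2
  -- lower bound for the Laplacian
  have hlow : ∀ z : V, u (next z) ≤ u z → -((u z - u (next z)) ^ (m - 1)) ≤ lapM μ m u z := by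
    intro z hzc
    rw [hlap z]
    set c := u (next z) with hc
    have hKnn : 0 ≤ (u z - c) ^ (m - 1) := Real.rpow_nonneg (by linarith) _
    have hkey : ∀ y ∈ N z,
        -(μ z y * (u z - c) ^ (m - 1)) ≤ μ z y * |u y - u z| ^ (m - 2) * (u y - u z) := by
      intro y hyN
      have hadjzy := (hmemN z y).1 hyN
      have hcy : c ≤ u y :=
        le_trans (le_of_eq (hnextval z)) (hsInf_le z y hadjzy)
      rcases le_or_gt (u z) (u y) with hle | hlt
      · have h1 : 0 ≤ μ z y * |u y - u z| ^ (m - 2) * (u y - u z) :=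
          mul_nonneg (mul_nonneg (hnonneg z y)
            (Real.rpow_nonneg (abs_nonneg _) _)) (by linarith)
        have h2 : 0 ≤ μ z y * (u z - c) ^ (m - 1) := mul_nonneg (hnonneg z y) hKnn
        linarith
      · have h0 : 0 < u z - u y := by linarith
        have habs : |u y - u z| = u z - u y := by
          rw [abs_of_neg (by linarith)]; ring
        have hpow : (u z - u y) ^ (m - 1) = (u z - u y) ^ (m - 2) * (u z - u y) := by
          have h1 : m - 1 = (m - 2) + 1 := by ring
          rw [h1, Real.rpow_add_one h0.ne' (m - 2)]
        have hmono : (u z - u y) ^ (m - 1) ≤ (u z - c) ^ (m - 1) :=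
          Real.rpow_le_rpow h0.le (by linarith) (by linarith)
        have heq : μ z y * |u y - u z| ^ (m - 2) * (u y - u z)
            = -(μ z y * (u z - u y) ^ (m - 1)) := by
          rw [habs, hpow]; ring
        rw [heq]
        have := mul_le_mul_of_nonneg_left hmono (hnonneg z y)
        linarith
    have hS : -(vMeasure μ z * (u z - c) ^ (m - 1)) ≤
        ∑ y ∈ N z, μ z y * |u y - u z| ^ (m - 2) * (u y - u z) := by
      have h1 : ∑ y ∈ N z, -(μ z y * (u z - c) ^ (m - 1)) ≤
          ∑ y ∈ N z, μ z y * |u y - u z| ^ (m - 2) * (u y - u z) :=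
        Finset.sum_le_sum hkey
      have h2 : ∑ y ∈ N z, -(μ z y * (u z - c) ^ (m - 1)) =
          -(vMeasure μ z * (u z - c) ^ (m - 1)) := by
        rw [hvM z, Finset.sum_neg_distrib, Finset.sum_mul]
      linarith
    have hinv : 0 < (vMeasure μ z)⁻¹ := inv_pos.2 (hvpos z)
    have h3 := mul_le_mul_of_nonneg_left hS hinv.le
    have h4 : (vMeasure μ z)⁻¹ * -(vMeasure μ z * (u z - c) ^ (m - 1))
        = -((u z - c) ^ (m - 1)) := by
      rw [mul_neg, ← mul_assoc, inv_mul_cancel₀ (hvpos z).ne', one_mul]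
    rw [h4] at h3
    exact h3
  have hlow' : ∀ n, -((u (x n) - u (x (n + 1))) ^ (m - 1)) ≤ lapM μ m u (x n) := by
    intro n
    rw [hxsucc n]
    exact hlow (x n) (by rw [← hxsucc n]; exact (hdec n).le)
  -- squeeze for the Laplacian
  have hlap0 : Filter.Tendsto (fun n => lapM μ m u (x n)) Filter.atTop (nhds 0) := by
    exact tendsto_of_tendsto_of_tendsto_of_le_of_le
      (g := fun n => -((u (x n) - u (x (n + 1))) ^ (m - 1)))
      (h := fun _ => (0 : ℝ)) (by simpa using hd.neg) tendsto_const_nhds hlow'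
      (fun n => (hlapn n).le)
  -- squeeze for the nonlinear term
  have hterm : Filter.Tendsto (fun n => u (x n) ^ p * gradNorm μ u (x n) ^ q)
      Filter.atTop (nhds 0) := by
    refine tendsto_of_tendsto_of_tendsto_of_le_of_le
      (g := fun _ => (0 : ℝ)) (h := fun n => -(lapM μ m u (x n)))
      tendsto_const_nhds (by simpa using hlap0.neg) ?_ ?_
    · intro n
      exact (mul_pos (Real.rpow_pos_of_pos (hu _) p)
        (Real.rpow_pos_of_pos (hginv n) q)).le
    · intro n
      show u (x n) ^ p * gradNorm μ u (x n) ^ q ≤ -lapM μ m u (x n)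
      linarith [hsol (x n)]
  refine ⟨x, ?_, ?_, ?_, hginv, hlapn, hlap0, hterm⟩
  · intro n
    rw [hxsucc n]
    exact hnextadj (x n)
  · intro n
    rw [hxsucc n]
    exact hnextval (x n)
  · intro n
    exact (hdec n).le
end

section
/- Let m>1, λ>0 and p∈ℝ. For an integer n ≥ 2 define Λ₄(n) = [ (e^{λn}·(1/n − 1/(n+1))^{m−1} − e^{λ(n−1)}·(1/(n−1) − 1/n)^{m−1}) / (e^{λn} + e^{λ(n−1)}) ] · (1/n + 1)^{−p} · 2^{(m−1)/2} · [ (e^{λn}·(1/n − 1/(n+1))² + e^{λ(n−1)}·(1/(n−1) − 1/n)²) / (e^{λn} + e^{λ(n−1)}) ]^{−(m−1)/2}. Then lim_{n→∞} Λ₄(n) = 2^{(m−1)/2}·(1 − e^{−λ})/(1 + e^{−λ}). -/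
open Filter Real

theorem statement19 (m lam p : ℝ) (hm : 1 < m) (hlam : 0 < lam) :
    Filter.Tendsto
      (fun n : ℕ =>
        ((Real.exp (lam * n) * (1 / (n : ℝ) - 1 / ((n : ℝ) + 1)) ^ (m - 1) -
            Real.exp (lam * ((n : ℝ) - 1)) *
              (1 / ((n : ℝ) - 1) - 1 / (n : ℝ)) ^ (m - 1)) /
          (Real.exp (lam * n) + Real.exp (lam * ((n : ℝ) - 1)))) *
        (1 / (n : ℝ) + 1) ^ (-p) * (2 : ℝ) ^ ((m - 1) / 2) *
        ((Real.exp (lam * n) * (1 / (n : ℝ) - 1 / ((n : ℝ) + 1)) ^ 2 +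
            Real.exp (lam * ((n : ℝ) - 1)) *
              (1 / ((n : ℝ) - 1) - 1 / (n : ℝ)) ^ 2) /
          (Real.exp (lam * n) + Real.exp (lam * ((n : ℝ) - 1)))) ^ (-((m - 1) / 2)))
      Filter.atTop
      (nhds ((2 : ℝ) ^ ((m - 1) / 2) * (1 - Real.exp (-lam)) /
        (1 + Real.exp (-lam)))) := by
  set r : ℝ := Real.exp (-lam) with hrdef
  have hr0 : 0 < r := Real.exp_pos _
  have hr1 : (0:ℝ) < 1 + r := by positivity
  set s : ℝ := (m - 1) / 2 with hsdef
  set T : ℕ → ℝ := fun n => ((n:ℝ) + 1) / ((n:ℝ) - 1) with hT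
  -- limit of T
  have ht : Tendsto T atTop (nhds 1) := by
    have h2 : Tendsto (fun n : ℕ => 2 / ((n:ℝ) - 1)) atTop (nhds 0) := by
      apply Tendsto.div_atTop (tendsto_const_nhds)
      exact tendsto_atTop_add_const_right _ _ tendsto_natCast_atTop_atTop
    have := (tendsto_const_nhds (x := (1:ℝ)) (f := atTop)).add h2
    rw [add_zero] at this
    apply this.congr'
    filter_upwards [eventually_ge_atTop 2] with n hn
    have hx : (2:ℝ) ≤ (n:ℝ) := by exact_mod_cast hn
    have hx1 : (n:ℝ) - 1 ≠ 0 := by nlinarith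
    show 1 + 2 / ((n:ℝ) - 1) = ((n:ℝ) + 1) / ((n:ℝ) - 1)
    rw [one_add_div hx1]
    ring
  -- limit of the simplified function
  have hg : Tendsto (fun n : ℕ =>
      (1 - r * T n ^ (m - 1)) / (1 + r) * (1 / (n:ℝ) + 1) ^ (-p) * (2:ℝ) ^ s *
        ((1 + r * T n ^ 2) / (1 + r)) ^ (-s)) atTop
      (nhds ((2:ℝ) ^ s * (1 - r) / (1 + r))) := by
    have h1 : Tendsto (fun n : ℕ => (1 - r * T n ^ (m - 1)) / (1 + r)) atTop
        (nhds ((1 - r) / (1 + r))) := by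
      have := (ht.rpow_const (p := m - 1) (Or.inl one_ne_zero))
      rw [Real.one_rpow] at this
      have := ((tendsto_const_nhds (x := (1:ℝ))).sub ((tendsto_const_nhds (x := r)).mul this))
      rw [mul_one] at this
      exact this.div_const _
    have h2 : Tendsto (fun n : ℕ => (1 / (n:ℝ) + 1) ^ (-p)) atTop (nhds 1) := by
      have := (tendsto_one_div_atTop_nhds_zero_nat.add (tendsto_const_nhds (x := (1:ℝ)))).rpow_const
        (p := -p) (Or.inl (by norm_num))
      simpa using this
    have h3 : Tendsto (fun n : ℕ => ((1 + r * T n ^ 2) / (1 + r)) ^ (-s)) atTop (nhds 1) := by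
      have hb : Tendsto (fun n : ℕ => (1 + r * T n ^ 2) / (1 + r)) atTop (nhds 1) := by
        have := ((tendsto_const_nhds (x := (1:ℝ))).add
          ((tendsto_const_nhds (x := r)).mul (ht.pow 2))).div_const (1 + r)
        simpa [div_self hr1.ne'] using this
      have := hb.rpow_const (p := -s) (Or.inl one_ne_zero)
      simpa using this
    have := ((h1.mul h2).mul (tendsto_const_nhds (x := (2:ℝ) ^ s))).mul h3
    simpa [mul_comm, mul_assoc, mul_left_comm, mul_div_assoc] using this
  refine Tendsto.congr' ?_ hg
  filter_upwards [eventually_ge_atTop 2] with n hn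
  have hx : (2:ℝ) ≤ (n:ℝ) := by exact_mod_cast hn
  have hx0 : (0:ℝ) < (n:ℝ) := by linarith
  have hx1 : (0:ℝ) < (n:ℝ) - 1 := by linarith
  have hx2 : (0:ℝ) < (n:ℝ) + 1 := by linarith
  set x : ℝ := (n:ℝ)
  symm
  have ha0 : (0:ℝ) < 1 / (x * (x + 1)) := by positivity
  set a : ℝ := 1 / (x * (x + 1)) with hadef
  have ht0 : (0:ℝ) < T n := by
    rw [hT]; positivity
  have haeq : 1 / x - 1 / (x + 1) = a := by
    rw [hadef]; field_simp; ring
  have hbeq : 1 / (x - 1) - 1 / x = a * T n := by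
    rw [hadef]
    show 1 / (x - 1) - 1 / x = 1 / (x * (x + 1)) * ((x + 1) / (x - 1))
    rw [div_sub_div _ _ hx1.ne' hx0.ne', div_mul_div_comm,
      div_eq_div_iff (mul_pos hx1 hx0).ne' (mul_pos (mul_pos hx0 hx2) hx1).ne']
    ring
  have hE : Real.exp (lam * (x - 1)) = Real.exp (lam * x) * r := by
    rw [hrdef, ← Real.exp_add]; ring_nf
  have hE0 : (0:ℝ) < Real.exp (lam * x) := Real.exp_pos _
  rw [haeq, hbeq, hE]
  have hmr : (a * T n) ^ (m - 1) = a ^ (m - 1) * T n ^ (m - 1) :=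
    Real.mul_rpow ha0.le ht0.le
  have hnum1 : Real.exp (lam * x) * a ^ (m - 1) -
      Real.exp (lam * x) * r * (a * T n) ^ (m - 1)
      = Real.exp (lam * x) * (a ^ (m - 1) * (1 - r * T n ^ (m - 1))) := by
    rw [hmr]; ring
  have hnum2 : Real.exp (lam * x) * a ^ 2 + Real.exp (lam * x) * r * (a * T n) ^ 2
      = Real.exp (lam * x) * (a ^ 2 * (1 + r * T n ^ 2)) := by ring
  have hden : Real.exp (lam * x) + Real.exp (lam * x) * r
      = Real.exp (lam * x) * (1 + r) := by ring
  rw [hnum1, hnum2, hden, mul_div_mul_left _ _ hE0.ne', mul_div_mul_left _ _ hE0.ne']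
  have hsplit : (a ^ 2 * (1 + r * T n ^ 2) / (1 + r)) ^ (-s)
      = a ^ (-(2 * s)) * ((1 + r * T n ^ 2) / (1 + r)) ^ (-s) := by
    rw [mul_div_assoc, Real.mul_rpow (by positivity) (by positivity),
      ← Real.rpow_natCast a 2, ← Real.rpow_mul ha0.le]
    norm_num
  rw [hsplit]
  have h2s : 2 * s = m - 1 := by rw [hsdef]; ring
  have hcancel : a ^ (m - 1) * a ^ (-(2 * s)) = 1 := by
    rw [h2s, ← Real.rpow_add ha0]; simp
  have hmdiv : a ^ (m - 1) * (1 - r * T n ^ (m - 1)) / (1 + r)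
      = a ^ (m - 1) * ((1 - r * T n ^ (m - 1)) / (1 + r)) := by ring
  calc a ^ (m - 1) * (1 - r * T n ^ (m - 1)) / (1 + r) * (1 / x + 1) ^ (-p) *
        (2:ℝ) ^ s * (a ^ (-(2 * s)) * ((1 + r * T n ^ 2) / (1 + r)) ^ (-s))
      = (a ^ (m - 1) * a ^ (-(2 * s))) *
        ((1 - r * T n ^ (m - 1)) / (1 + r) * (1 / x + 1) ^ (-p) * (2:ℝ) ^ s *
          ((1 + r * T n ^ 2) / (1 + r)) ^ (-s)) := by ring
    _ = (1 - r * T n ^ (m - 1)) / (1 + r) * (1 / x + 1) ^ (-p) * (2:ℝ) ^ s *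
          ((1 + r * T n ^ 2) / (1 + r)) ^ (-s) := by rw [hcancel, one_mul]
end
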